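/- arXiv:1804.08201 — 9 statements merged into one kernel-verified Lean document; each statement's English description precedes it below -/
import Mathlib

section
/- For every r > 0 one has the chain of strict inequalities 1 > r·a'(r)/a(r) > r·c'(r)/c(r) > −r·b'(r)/b(r) > 0. -/
/-!
The first inequality is concavity of `a` together with `a 0 = 0`: by the mean value theorem
`a r / r = a' ξ` for some `ξ ∈ (0, r)`, and `a'` is strictly decreasing. The middle two are
pointwise consequences of the ODE, which gives the identities
`a' c - c' a = (a - c) (a + c - b) / b` and `c' b + b' c = b + c - a`,
whose signs are fixed by `b < 0 < a < c` and `b + c < a`. The last is just `b' > 0 > b`.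
-/

open Set

theorem sub_mul_lt_sub_of_strictAntiOn_deriv {f f' : ℝ → ℝ} {x₀ r : ℝ} (hr : x₀ < r)
    (hf : ContinuousOn f (Icc x₀ r)) (hdf : ∀ x ∈ Ioo x₀ r, HasDerivAt f (f' x) x)
    (hf' : StrictAntiOn f' (Ioc x₀ r)) : (r - x₀) * f' r < f r - f x₀ := by
  obtain ⟨ξ, hξ, hslope⟩ := exists_hasDerivAt_eq_slope f f' hr hf hdf
  have hlt : f' r < f' ξ := hf' (Ioo_subset_Ioc_self hξ) (right_mem_Ioc.2 hr) hξ.2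
  rw [hslope, lt_div_iff₀ (sub_pos.2 hr)] at hlt
  linarith

namespace AtiyahHitchin

variable {a b c a' b' c' : ℝ}

theorem deriv_a_mul_c_sub_deriv_c_mul_a (ha : a ≠ 0) (hb : b ≠ 0) (hc : c ≠ 0)
    (ha' : a' = (a ^ 2 - (b - c) ^ 2) / (2 * b * c))
    (hc' : c' = (c ^ 2 - (a - b) ^ 2) / (2 * a * b)) :
    a' * c - c' * a = (a - c) * (a + c - b) / b := by
  subst ha' hc'
  field_simp
  ring

theorem deriv_c_mul_b_add_deriv_b_mul_c (ha : a ≠ 0) (hb : b ≠ 0) (hc : c ≠ 0)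
    (hb' : b' = (b ^ 2 - (c - a) ^ 2) / (2 * c * a))
    (hc' : c' = (c ^ 2 - (a - b) ^ 2) / (2 * a * b)) :
    c' * b + b' * c = b + c - a := by
  subst hb' hc'
  field_simp
  ring

theorem deriv_c_div_c_lt_deriv_a_div_a (ha : 0 < a) (hb : b < 0) (hac : a < c)
    (ha' : a' = (a ^ 2 - (b - c) ^ 2) / (2 * b * c))
    (hc' : c' = (c ^ 2 - (a - b) ^ 2) / (2 * a * b)) :
    c' / c < a' / a := by
  have hc : 0 < c := ha.trans hac
  have hcross : 0 < a' * c - c' * a := by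
    rw [deriv_a_mul_c_sub_deriv_c_mul_a ha.ne' hb.ne hc.ne' ha' hc']
    exact div_pos_of_neg_of_neg (mul_neg_of_neg_of_pos (by linarith) (by linarith)) hb
  rw [div_lt_div_iff₀ hc ha]
  linarith

theorem deriv_b_div_neg_b_lt_deriv_c_div_c (ha : 0 < a) (hb : b < 0) (hc : 0 < c)
    (habc : b + c < a)
    (hb' : b' = (b ^ 2 - (c - a) ^ 2) / (2 * c * a))
    (hc' : c' = (c ^ 2 - (a - b) ^ 2) / (2 * a * b)) :
    b' / -b < c' / c := by
  have hsum := deriv_c_mul_b_add_deriv_b_mul_c ha.ne' hb.ne hc.ne' hb' hc'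
  rw [div_lt_div_iff₀ (neg_pos.2 hb) hc]
  linarith

end AtiyahHitchin

theorem atiyah_hitchin_derivative_estimates_general
    (a b c a' b' c' a'' : ℝ → ℝ)
    (hca : ContinuousOn a (Set.Ici 0))
    (hda : ∀ r > (0:ℝ), HasDerivAt a (a' r) r)
    (hdda : ∀ r > (0:ℝ), HasDerivAt a' (a'' r) r)
    (hODEa : ∀ r > (0:ℝ), a' r = (a r ^ 2 - (b r - c r) ^ 2) / (2 * b r * c r))
    (hODEb : ∀ r > (0:ℝ), b' r = (b r ^ 2 - (c r - a r) ^ 2) / (2 * c r * a r))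
    (hODEc : ∀ r > (0:ℝ), c' r = (c r ^ 2 - (a r - b r) ^ 2) / (2 * a r * b r))
    (hia : a 0 = 0)
    (hapos : ∀ r > (0:ℝ), 0 < a r)
    (hcpos : ∀ r > (0:ℝ), 0 < c r)
    (hbneg : ∀ r > (0:ℝ), b r < 0)
    (hb' : ∀ r > (0:ℝ), 0 < b' r)
    (ha'' : ∀ r > (0:ℝ), a'' r < 0)
    (hac : ∀ r > (0:ℝ), a r < c r)
    (habc : ∀ r > (0:ℝ), b r + c r < a r) :
    ∀ r > (0:ℝ),
      1 > r * a' r / a r ∧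
      r * a' r / a r > r * c' r / c r ∧
      r * c' r / c r > -(r * b' r) / b r ∧
      -(r * b' r) / b r > 0 := by
  intro r hr
  have ha'_anti : StrictAntiOn a' (Ioi 0) :=
    strictAntiOn_of_hasDerivWithinAt_neg (convex_Ioi 0)
      (fun x hx => (hdda x hx).continuousAt.continuousWithinAt)
      (fun x hx => (hdda x (by simpa using hx)).hasDerivWithinAt)
      (fun x hx => ha'' x (by simpa using hx))
  have hconcave : (r - 0) * a' r < a r - a 0 :=
    sub_mul_lt_sub_of_strictAntiOn_deriv hr (hca.mono Icc_subset_Ici_self)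
      (fun x hx => hda x hx.1) (ha'_anti.mono Ioc_subset_Ioi_self)
  have hca_ratio := AtiyahHitchin.deriv_c_div_c_lt_deriv_a_div_a (hapos r hr) (hbneg r hr)
    (hac r hr) (hODEa r hr) (hODEc r hr)
  have hbc_ratio := AtiyahHitchin.deriv_b_div_neg_b_lt_deriv_c_div_c (hapos r hr) (hbneg r hr)
    (hcpos r hr) (habc r hr) (hODEb r hr) (hODEc r hr)
  have hneg_b_ratio : -(r * b' r) / b r = r * (b' r / -b r) := by
    rw [neg_div, ← div_neg, mul_div_assoc]
  simp only [mul_div_assoc, hneg_b_ratio, gt_iff_lt]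
  refine ⟨?_, mul_lt_mul_of_pos_left hca_ratio hr, mul_lt_mul_of_pos_left hbc_ratio hr,
    mul_pos hr (div_pos (hb' r hr) (neg_pos.2 (hbneg r hr)))⟩
  rw [← mul_div_assoc, div_lt_one (hapos r hr)]
  simpa [hia] using hconcave

/-- For the coefficient functions `a, b, c` of the Atiyah–Hitchin metric, for every `r > 0`
one has `1 > r·a'(r)/a(r) > r·c'(r)/c(r) > −r·b'(r)/b(r) > 0`. -/
theorem atiyah_hitchin_derivative_estimates
    (m : ℝ) (hm : 0 < m)
    (a b c a' b' c' a'' b'' c'' : ℝ → ℝ)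
    (hca : ContinuousOn a (Set.Ici 0))
    (hcb : ContinuousOn b (Set.Ici 0))
    (hcc : ContinuousOn c (Set.Ici 0))
    (hda : ∀ r > (0:ℝ), HasDerivAt a (a' r) r)
    (hdb : ∀ r > (0:ℝ), HasDerivAt b (b' r) r)
    (hdc : ∀ r > (0:ℝ), HasDerivAt c (c' r) r)
    (hdda : ∀ r > (0:ℝ), HasDerivAt a' (a'' r) r)
    (hddb : ∀ r > (0:ℝ), HasDerivAt b' (b'' r) r)
    (hddc : ∀ r > (0:ℝ), HasDerivAt c' (c'' r) r)
    (hODEa : ∀ r > (0:ℝ), a' r = (a r ^ 2 - (b r - c r) ^ 2) / (2 * b r * c r))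
    (hODEb : ∀ r > (0:ℝ), b' r = (b r ^ 2 - (c r - a r) ^ 2) / (2 * c r * a r))
    (hODEc : ∀ r > (0:ℝ), c' r = (c r ^ 2 - (a r - b r) ^ 2) / (2 * a r * b r))
    (hia : a 0 = 0) (hib : b 0 = -m) (hic : c 0 = m)
    (hapos : ∀ r > (0:ℝ), 0 < a r)
    (hcpos : ∀ r > (0:ℝ), 0 < c r)
    (hbneg : ∀ r > (0:ℝ), b r < 0)
    (ha' : ∀ r > (0:ℝ), 0 < a' r)
    (hb' : ∀ r > (0:ℝ), 0 < b' r)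
    (hc' : ∀ r > (0:ℝ), 0 < c' r)
    (ha'' : ∀ r > (0:ℝ), a'' r < 0)
    (hac : ∀ r > (0:ℝ), a r < c r)
    (habc : ∀ r > (0:ℝ), b r + c r < a r) :
    ∀ r > (0:ℝ),
      1 > r * a' r / a r ∧
      r * a' r / a r > r * c' r / c r ∧
      r * c' r / c r > -(r * b' r) / b r ∧
      -(r * b' r) / b r > 0 :=
  atiyah_hitchin_derivative_estimates_general a b c a' b' c' a'' hca hda hdda hODEa hODEb hODEc hia
    hapos hcpos hbneg hb' ha'' hac habc
end

section
/- For every r > 0 one has b(r) + c(r) > 0. -/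
/-!
Write `s = b + c`. The equations for `b'` and `c'` combine to
`s' = (s - a) (a s + (b - c)²) / (2abc)`, and `s - a < 0`, `abc < 0` when `s ≤ 0`,
so `s' > 0` wherever `s ≤ 0` and `a s + (b - c)² > 0`. The second factor equals `4m²`
at `r = 0`, so it stays positive on some `(0, ε]`, where a minimum principle gives `s > 0`;
beyond `ε` the factor is `(b - c)² > 0` at every zero of `s`, so `s` can never cross zero.
-/

open Set Filter Topology

lemma HasDerivAt.eventually_lt_of_pos {f : ℝ → ℝ} {d x : ℝ} (hf : HasDerivAt f d x)
    (hd : 0 < d) : ∀ᶠ t in 𝓝[<] x, f t < f x := by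
  have hslope : Tendsto (slope f x) (𝓝[<] x) (𝓝 d) :=
    (hasDerivWithinAt_iff_tendsto_slope' (s := Iio x) (lt_irrefl x)).mp hf.hasDerivWithinAt
  filter_upwards [hslope.eventually_const_lt hd, self_mem_nhdsWithin] with t hpos (ht : t < x)
  rw [slope_def_field] at hpos
  rcases div_pos_iff.mp hpos with ⟨-, h⟩ | ⟨h, -⟩ <;> linarith

lemma HasDerivAt.exists_mem_Ioo_lt_of_pos {f : ℝ → ℝ} {d l t : ℝ} (hf : HasDerivAt f d t)
    (hlt : l < t) (hd : 0 < d) : ∃ y ∈ Ioo l t, f y < f t :=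
  ((hf.eventually_lt_of_pos hd).and (Ioo_mem_nhdsLT hlt)).exists.imp fun _ h => ⟨h.2, h.1⟩

lemma pos_on_Ioc_of_deriv_pos_of_nonpos {f f' : ℝ → ℝ} {l r : ℝ}
    (hf : ContinuousOn f (Icc l r)) (hl : 0 ≤ f l)
    (hderiv : ∀ x ∈ Ioc l r, HasDerivAt f (f' x) x)
    (hpos : ∀ x ∈ Ioc l r, f x ≤ 0 → 0 < f' x) :
    ∀ x ∈ Ioc l r, 0 < f x := by
  intro x hx
  by_contra! hfx
  obtain ⟨t₀, ht₀, hmin₀⟩ := isCompact_Icc.exists_isMinOn (nonempty_Icc.mpr hx.1.le)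
    (hf.mono (Icc_subset_Icc_right hx.2))
  -- a minimum at `l` forces `f l = f x`, so `x` is a minimum too
  obtain ⟨t, ht, hmin⟩ : ∃ t ∈ Ioc l x, IsMinOn f (Icc l x) t := by
    rcases ht₀.1.eq_or_lt with rfl | hlt
    · refine ⟨x, ⟨hx.1, le_rfl⟩, isMinOn_iff.mpr fun y hy => ?_⟩
      have := isMinOn_iff.mp hmin₀ y hy
      linarith
    · exact ⟨t₀, ⟨hlt, ht₀.2⟩, hmin₀⟩
  have htr : t ∈ Ioc l r := ⟨ht.1, ht.2.trans hx.2⟩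
  have hft : f t ≤ 0 := (hmin (right_mem_Icc.mpr hx.1.le)).trans hfx
  obtain ⟨y, hy, hfy⟩ := (hderiv t htr).exists_mem_Ioo_lt_of_pos ht.1 (hpos t htr hft)
  exact (hmin ⟨hy.1.le, hy.2.le.trans ht.2⟩).not_gt hfy

lemma pos_on_Icc_of_deriv_pos_at_zeros {f f' : ℝ → ℝ} {l r : ℝ}
    (hf : ContinuousOn f (Icc l r)) (hl : 0 < f l)
    (hderiv : ∀ x ∈ Ioc l r, HasDerivAt f (f' x) x)
    (hpos : ∀ x ∈ Ioc l r, f x = 0 → 0 < f' x) :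
    ∀ x ∈ Icc l r, 0 < f x := by
  intro x hx
  by_contra! hfx
  have hxr : Icc l x ⊆ Icc l r := Icc_subset_Icc_right hx.2
  have hS : IsCompact (Icc l x ∩ f ⁻¹' Iic 0) := isCompact_Icc.of_isClosed_subset
    ((hf.mono hxr).preimage_isClosed_of_isClosed isClosed_Icc isClosed_Iic) inter_subset_left
  obtain ⟨t, ⟨ht, hft⟩, hleast⟩ := hS.exists_isLeast ⟨x, ⟨hx.1, le_rfl⟩, hfx⟩
  have hlt : l < t := ht.1.lt_of_ne (by rintro rfl; exact (hft.trans_lt hl).false)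
  have hft0 : f t = 0 := by
    obtain ⟨z, hz, hfz⟩ := intermediate_value_Icc' ht.1
      (hf.mono ((Icc_subset_Icc_right ht.2).trans hxr)) ⟨hft, hl.le⟩
    have : t ≤ z := hleast ⟨⟨hz.1, hz.2.trans ht.2⟩, hfz.le⟩
    rwa [hz.2.antisymm this] at hfz
  have htr : t ∈ Ioc l r := ⟨hlt, ht.2.trans hx.2⟩
  obtain ⟨y, hy, hfy⟩ := (hderiv t htr).exists_mem_Ioo_lt_of_pos hlt (hpos t htr hft0)
  exact (hleast ⟨⟨hy.1.le, hy.2.le.trans ht.2⟩, (hfy.trans_eq hft0).le⟩).not_gt hy.2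

lemma atiyah_hitchin_deriv_b_add_c_pos {a b c : ℝ} (ha : 0 < a) (hb : b < 0) (hc : 0 < c)
    (hs : b + c ≤ 0) (hq : 0 < a * (b + c) + (b - c) ^ 2) :
    0 < (b ^ 2 - (c - a) ^ 2) / (2 * c * a) + (c ^ 2 - (a - b) ^ 2) / (2 * a * b) := by
  rw [show (b ^ 2 - (c - a) ^ 2) / (2 * c * a) + (c ^ 2 - (a - b) ^ 2) / (2 * a * b)
      = (b + c - a) * (a * (b + c) + (b - c) ^ 2) / (2 * a * b * c) by
    field_simp [ha.ne', hb.ne, hc.ne']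
    ring]
  exact div_pos_of_neg_of_neg (mul_neg_of_neg_of_pos (by linarith) hq)
    (mul_neg_of_neg_of_pos (mul_neg_of_pos_of_neg (by positivity) hb) hc)

theorem atiyah_hitchin_b_add_c_pos_general
    (m : ℝ) (hm : 0 < m)
    (a b c : ℝ → ℝ)
    (hca : ContinuousOn a (Set.Ici 0))
    (hcb : ContinuousOn b (Set.Ici 0))
    (hcc : ContinuousOn c (Set.Ici 0))
    (hdb : ∀ r > (0:ℝ),
      HasDerivAt b ((b r ^ 2 - (c r - a r) ^ 2) / (2 * c r * a r)) r)
    (hdc : ∀ r > (0:ℝ),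
      HasDerivAt c ((c r ^ 2 - (a r - b r) ^ 2) / (2 * a r * b r)) r)
    (hib : b 0 = -m) (hic : c 0 = m)
    (hapos : ∀ r > (0:ℝ), 0 < a r)
    (hcpos : ∀ r > (0:ℝ), 0 < c r)
    (hbneg : ∀ r > (0:ℝ), b r < 0) :
    ∀ r > (0:ℝ), 0 < b r + c r := by
  intro r hr
  have hs0 : b 0 + c 0 = 0 := by rw [hib, hic, neg_add_cancel]
  have hsd : ∀ x > (0:ℝ), HasDerivAt (fun y => b y + c y)
      ((b x ^ 2 - (c x - a x) ^ 2) / (2 * c x * a x) +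
        (c x ^ 2 - (a x - b x) ^ 2) / (2 * a x * b x)) x :=
    fun x hx => (hdb x hx).add (hdc x hx)
  have hsc : ContinuousOn (fun y => b y + c y) (Ici 0) := hcb.add hcc
  obtain ⟨ε, hε, hq⟩ :
      ∃ ε ∈ Ioi (0:ℝ), Icc 0 ε ⊆ {x | 0 < a x * (b x + c x) + (b x - c x) ^ 2} := by
    have hq0 : 0 < a 0 * (b 0 + c 0) + (b 0 - c 0) ^ 2 := by
      rw [hs0, hib, hic]
      nlinarith
    exact mem_nhdsGE_iff_exists_Icc_subset.mp
      ((((hca.mul hsc).add ((hcb.sub hcc).pow 2)) 0 self_mem_Ici).eventually_const_lt hq0)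
  have hsmall : ∀ x ∈ Ioc 0 ε, 0 < b x + c x :=
    pos_on_Ioc_of_deriv_pos_of_nonpos (hsc.mono Icc_subset_Ici_self) hs0.ge
      (fun x hx => hsd x hx.1) fun x hx hsx =>
        atiyah_hitchin_deriv_b_add_c_pos (hapos x hx.1) (hbneg x hx.1) (hcpos x hx.1) hsx
          (hq ⟨hx.1.le, hx.2⟩)
  rcases le_or_gt r ε with hrε | hεr
  · exact hsmall r ⟨hr, hrε⟩
  refine pos_on_Icc_of_deriv_pos_at_zeros (hsc.mono fun x hx => (hε.trans_le hx.1).le)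
    (hsmall ε ⟨hε, le_rfl⟩) (fun x hx => hsd x (hε.trans hx.1)) (fun x hx hsx => ?_) r
    ⟨hεr.le, le_rfl⟩
  have hx : 0 < x := hε.trans hx.1
  refine atiyah_hitchin_deriv_b_add_c_pos (hapos x hx) (hbneg x hx) (hcpos x hx) hsx.le ?_
  rw [hsx, mul_zero, zero_add]
  nlinarith [hbneg x hx, hcpos x hx]

/-- For the coefficient functions of the Atiyah–Hitchin metric, `b(r) + c(r) > 0`
for every `r > 0`. -/
theorem atiyah_hitchin_b_add_c_pos
    (m : ℝ) (hm : 0 < m)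
    (a b c : ℝ → ℝ)
    (hca : ContinuousOn a (Set.Ici 0))
    (hcb : ContinuousOn b (Set.Ici 0))
    (hcc : ContinuousOn c (Set.Ici 0))
    (hda : ∀ r > (0:ℝ),
      HasDerivAt a ((a r ^ 2 - (b r - c r) ^ 2) / (2 * b r * c r)) r)
    (hdb : ∀ r > (0:ℝ),
      HasDerivAt b ((b r ^ 2 - (c r - a r) ^ 2) / (2 * c r * a r)) r)
    (hdc : ∀ r > (0:ℝ),
      HasDerivAt c ((c r ^ 2 - (a r - b r) ^ 2) / (2 * a r * b r)) r)
    (hia : a 0 = 0) (hib : b 0 = -m) (hic : c 0 = m)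
    (hapos : ∀ r > (0:ℝ), 0 < a r)
    (hcpos : ∀ r > (0:ℝ), 0 < c r)
    (hbneg : ∀ r > (0:ℝ), b r < 0) :
    ∀ r > (0:ℝ), 0 < b r + c r :=
  atiyah_hitchin_b_add_c_pos_general m hm a b c hca hcb hcc hdb hdc hib hic hapos hcpos hbneg
end

section
/- The function a satisfies the second-order equation a''(r) = a(r)·κ(a(r), b(r), c(r)) for all r in I; explicitly, 2·a(r)·b(r)²·c(r)²·a''(r) = 2a⁴ − a²(b−c)² − a³(b+c) + a(b−c)²(b+c) − (b+c)²(b−c)² evaluated at r. By the cyclic symmetry of the system, also b''(r) = b(r)·κ(b(r), c(r), a(r)) and c''(r) = c(r)·κ(c(r), a(r), b(r)). -/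
/-- The curvature quantity `κ(a,b,c)` of the Atiyah–Hitchin manifold. -/
noncomputable def kappa (a b c : ℝ) : ℝ :=
  (2 * a ^ 4 - a ^ 2 * (b - c) ^ 2 - a ^ 3 * (b + c)
    + a * (b - c) ^ 2 * (b + c) - (b + c) ^ 2 * (b - c) ^ 2) / (2 * (a * b * c) ^ 2)

/-!
Differentiating `a' = (a² − (b−c)²)/(2bc)` once more by the quotient rule and substituting the
system for `a'`, `b'`, `c'` leaves a rational identity in `a, b, c`. The system is invariant
under the cyclic shift `(a,b,c) ↦ (b,c,a)`, so the same computation gives `b''` and `c''`.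
-/

open Filter Topology

/-- The Atiyah–Hitchin system reads `a' = ahField a b c`, `b' = ahField b c a`,
`c' = ahField c a b`. -/
noncomputable def ahField (x y z : ℝ) : ℝ := (x ^ 2 - (y - z) ^ 2) / (2 * y * z)

theorem HasDerivAt.ahField {x y z : ℝ → ℝ} {x' y' z' r : ℝ}
    (hx : HasDerivAt x x' r) (hy : HasDerivAt y y' r) (hz : HasDerivAt z z' r)
    (hy0 : y r ≠ 0) (hz0 : z r ≠ 0) :
    HasDerivAt (fun t => _root_.ahField (x t) (y t) (z t))
      ((2 * x r * x' - 2 * (y r - z r) * (y' - z')) / (2 * y r * z r)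
        - _root_.ahField (x r) (y r) (z r) * (y' / y r + z' / z r)) r := by
  have hnum := (hx.pow 2).sub ((hy.sub hz).pow 2)
  have hden := (hy.const_mul (2 : ℝ)).mul hz
  refine (hnum.div hden (mul_ne_zero (mul_ne_zero two_ne_zero hy0) hz0)).congr_deriv ?_
  simp only [_root_.ahField, Pi.mul_apply, Pi.sub_apply, Pi.pow_apply, Nat.cast_ofNat]
  field_simp
  ring

theorem deriv_ahField_along_ahField {x y z : ℝ} (hx : x ≠ 0) (hy : y ≠ 0) (hz : z ≠ 0) :
    (2 * x * ahField x y z - 2 * (y - z) * (ahField y z x - ahField z x y)) / (2 * y * z)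
      - ahField x y z * (ahField y z x / y + ahField z x y / z) = x * kappa x y z := by
  simp only [ahField, kappa]
  field_simp
  ring

theorem two_mul_mul_sq_mul_sq_mul_kappa {x y z : ℝ} (hx : x ≠ 0) (hy : y ≠ 0) (hz : z ≠ 0) :
    2 * x * y ^ 2 * z ^ 2 * (x * kappa x y z)
      = 2 * x ^ 4 - x ^ 2 * (y - z) ^ 2 - x ^ 3 * (y + z)
        + x * (y - z) ^ 2 * (y + z) - (y + z) ^ 2 * (y - z) ^ 2 := by
  rw [kappa]
  field_simp

theorem eq_mul_kappa_of_hasDerivAt_ahField {a b c a' b' c' : ℝ → ℝ} {r a'' : ℝ}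
    (hda : HasDerivAt a (a' r) r) (hdb : HasDerivAt b (b' r) r) (hdc : HasDerivAt c (c' r) r)
    (hdda : HasDerivAt a' a'' r)
    (hODEa : a' =ᶠ[𝓝 r] fun t => ahField (a t) (b t) (c t))
    (hODEb : b' r = ahField (b r) (c r) (a r)) (hODEc : c' r = ahField (c r) (a r) (b r))
    (ha : a r ≠ 0) (hb : b r ≠ 0) (hc : c r ≠ 0) :
    a'' = a r * kappa (a r) (b r) (c r) := by
  have hdda' := (hda.ahField hdb hdc hb hc).congr_of_eventuallyEq hODEa
  rw [hdda.unique hdda', hODEa.eq_of_nhds, hODEb, hODEc]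
  exact deriv_ahField_along_ahField ha hb hc

theorem atiyah_hitchin_second_derivatives_general
    (I : Set ℝ) (hIopen : IsOpen I)
    (a b c a' b' c' a'' b'' c'' : ℝ → ℝ)
    (hda : ∀ r ∈ I, HasDerivAt a (a' r) r)
    (hdb : ∀ r ∈ I, HasDerivAt b (b' r) r)
    (hdc : ∀ r ∈ I, HasDerivAt c (c' r) r)
    (hdda : ∀ r ∈ I, HasDerivAt a' (a'' r) r)
    (hddb : ∀ r ∈ I, HasDerivAt b' (b'' r) r)
    (hddc : ∀ r ∈ I, HasDerivAt c' (c'' r) r)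
    (hne : ∀ r ∈ I, a r * b r * c r ≠ 0)
    (hODEa : ∀ r ∈ I, a' r = (a r ^ 2 - (b r - c r) ^ 2) / (2 * b r * c r))
    (hODEb : ∀ r ∈ I, b' r = (b r ^ 2 - (c r - a r) ^ 2) / (2 * c r * a r))
    (hODEc : ∀ r ∈ I, c' r = (c r ^ 2 - (a r - b r) ^ 2) / (2 * a r * b r)) :
    ∀ r ∈ I,
      a'' r = a r * kappa (a r) (b r) (c r) ∧
      2 * a r * b r ^ 2 * c r ^ 2 * a'' r
        = 2 * a r ^ 4 - a r ^ 2 * (b r - c r) ^ 2 - a r ^ 3 * (b r + c r)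
          + a r * (b r - c r) ^ 2 * (b r + c r) - (b r + c r) ^ 2 * (b r - c r) ^ 2 ∧
      b'' r = b r * kappa (b r) (c r) (a r) ∧
      c'' r = c r * kappa (c r) (a r) (b r) := by
  intro r hr
  obtain ⟨⟨ha, hb⟩, hc⟩ : (a r ≠ 0 ∧ b r ≠ 0) ∧ c r ≠ 0 := by
    simpa only [ne_eq, mul_eq_zero, not_or] using hne r hr
  have hEa : a' =ᶠ[𝓝 r] fun t => ahField (a t) (b t) (c t) :=
    eventuallyEq_of_mem (hIopen.mem_nhds hr) hODEa
  have hEb : b' =ᶠ[𝓝 r] fun t => ahField (b t) (c t) (a t) :=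
    eventuallyEq_of_mem (hIopen.mem_nhds hr) hODEb
  have hEc : c' =ᶠ[𝓝 r] fun t => ahField (c t) (a t) (b t) :=
    eventuallyEq_of_mem (hIopen.mem_nhds hr) hODEc
  have hA := eq_mul_kappa_of_hasDerivAt_ahField (hda r hr) (hdb r hr) (hdc r hr) (hdda r hr)
    hEa hEb.eq_of_nhds hEc.eq_of_nhds ha hb hc
  refine ⟨hA, hA ▸ two_mul_mul_sq_mul_sq_mul_kappa ha hb hc, ?_, ?_⟩
  · exact eq_mul_kappa_of_hasDerivAt_ahField (hdb r hr) (hdc r hr) (hda r hr) (hddb r hr)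
      hEb hEc.eq_of_nhds hEa.eq_of_nhds hb hc ha
  · exact eq_mul_kappa_of_hasDerivAt_ahField (hdc r hr) (hda r hr) (hdb r hr) (hddc r hr)
      hEc hEa.eq_of_nhds hEb.eq_of_nhds hc ha hb

/-- For solutions `a, b, c` of the Atiyah–Hitchin ODE system on an open interval `I`
with `a·b·c ≠ 0`, the second derivatives satisfy `a'' = a·κ(a,b,c)`, explicitly
`2ab²c²·a'' = 2a⁴ − a²(b−c)² − a³(b+c) + a(b−c)²(b+c) − (b+c)²(b−c)²`, and by cyclic
symmetry `b'' = b·κ(b,c,a)` and `c'' = c·κ(c,a,b)`. -/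
theorem atiyah_hitchin_second_derivatives
    (I : Set ℝ) (hIopen : IsOpen I) (hIconn : I.OrdConnected)
    (a b c a' b' c' a'' b'' c'' : ℝ → ℝ)
    (hda : ∀ r ∈ I, HasDerivAt a (a' r) r)
    (hdb : ∀ r ∈ I, HasDerivAt b (b' r) r)
    (hdc : ∀ r ∈ I, HasDerivAt c (c' r) r)
    (hdda : ∀ r ∈ I, HasDerivAt a' (a'' r) r)
    (hddb : ∀ r ∈ I, HasDerivAt b' (b'' r) r)
    (hddc : ∀ r ∈ I, HasDerivAt c' (c'' r) r)
    (hne : ∀ r ∈ I, a r * b r * c r ≠ 0)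
    (hODEa : ∀ r ∈ I, a' r = (a r ^ 2 - (b r - c r) ^ 2) / (2 * b r * c r))
    (hODEb : ∀ r ∈ I, b' r = (b r ^ 2 - (c r - a r) ^ 2) / (2 * c r * a r))
    (hODEc : ∀ r ∈ I, c' r = (c r ^ 2 - (a r - b r) ^ 2) / (2 * a r * b r)) :
    ∀ r ∈ I,
      a'' r = a r * kappa (a r) (b r) (c r) ∧
      2 * a r * b r ^ 2 * c r ^ 2 * a'' r
        = 2 * a r ^ 4 - a r ^ 2 * (b r - c r) ^ 2 - a r ^ 3 * (b r + c r)
          + a r * (b r - c r) ^ 2 * (b r + c r) - (b r + c r) ^ 2 * (b r - c r) ^ 2 ∧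
      b'' r = b r * kappa (b r) (c r) (a r) ∧
      c'' r = c r * kappa (c r) (a r) (b r) :=
  atiyah_hitchin_second_derivatives_general I hIopen a b c a' b' c' a'' b'' c'' hda hdb hdc hdda
    hddb hddc hne hODEa hODEb hODEc
end

section
/- For every r ≥ 0 one has b(r)·c(r) ≤ −m², with equality if and only if r = 0. In particular the product b·c is strictly decreasing on (0,∞). -/
/-! The Atiyah–Hitchin equations give `(bc)' = b + c - a`, which is negative since `a > b + c`.
Hence `bc` is strictly decreasing on `[0, ∞)` and stays below its initial value
`b(0) c(0) = -m²`. -/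

open Set

lemma atiyahHitchin_deriv_mul_eq {a b c : ℝ} (ha : a ≠ 0) (hb : b ≠ 0) (hc : c ≠ 0) :
    (b ^ 2 - (c - a) ^ 2) / (2 * c * a) * c + b * ((c ^ 2 - (a - b) ^ 2) / (2 * a * b)) =
      b + c - a := by
  field_simp
  ring

lemma hasDerivAt_mul_of_atiyahHitchin {a b c : ℝ → ℝ} {r : ℝ}
    (ha : a r ≠ 0) (hb : b r ≠ 0) (hc : c r ≠ 0)
    (hdb : HasDerivAt b ((b r ^ 2 - (c r - a r) ^ 2) / (2 * c r * a r)) r)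
    (hdc : HasDerivAt c ((c r ^ 2 - (a r - b r) ^ 2) / (2 * a r * b r)) r) :
    HasDerivAt (fun r => b r * c r) (b r + c r - a r) r := by
  rw [← atiyahHitchin_deriv_mul_eq ha hb hc]
  exact hdb.mul hdc

theorem atiyah_hitchin_bc_le_neg_m_sq_general
    (m : ℝ)
    (a b c : ℝ → ℝ)
    (hcb : ContinuousOn b (Set.Ici 0))
    (hcc : ContinuousOn c (Set.Ici 0))
    (hdb : ∀ r > (0:ℝ),
      HasDerivAt b ((b r ^ 2 - (c r - a r) ^ 2) / (2 * c r * a r)) r)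
    (hdc : ∀ r > (0:ℝ),
      HasDerivAt c ((c r ^ 2 - (a r - b r) ^ 2) / (2 * a r * b r)) r)
    (hib : b 0 = -m) (hic : c 0 = m)
    (hapos : ∀ r > (0:ℝ), 0 < a r)
    (hcpos : ∀ r > (0:ℝ), 0 < c r)
    (hbneg : ∀ r > (0:ℝ), b r < 0)
    (habc : ∀ r > (0:ℝ), b r + c r < a r) :
    (∀ r ≥ (0:ℝ), b r * c r ≤ -m ^ 2 ∧ (b r * c r = -m ^ 2 ↔ r = 0)) ∧
      StrictAntiOn (fun r => b r * c r) (Set.Ioi 0) := by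
  have hderiv : ∀ r > (0:ℝ), HasDerivAt (fun r => b r * c r) (b r + c r - a r) r :=
    fun r hr => hasDerivAt_mul_of_atiyahHitchin (hapos r hr).ne' (hbneg r hr).ne
      (hcpos r hr).ne' (hdb r hr) (hdc r hr)
  have hanti : StrictAntiOn (fun r => b r * c r) (Ici 0) := by
    refine strictAntiOn_of_deriv_neg (convex_Ici 0) (hcb.mul hcc) fun r hr => ?_
    rw [interior_Ici] at hr
    rw [(hderiv r hr).deriv]
    linarith [habc r hr]
  have hbc0 : b 0 * c 0 = -m ^ 2 := by rw [hib, hic]; ring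
  refine ⟨fun r hr => ⟨?_, ?_⟩, hanti.mono Ioi_subset_Ici_self⟩
  · rw [← hbc0]
    exact (hanti.le_iff_ge hr self_mem_Ici).2 hr
  · rw [← hbc0]
    exact hanti.injOn.eq_iff hr self_mem_Ici

/-- For the coefficient functions of the Atiyah–Hitchin metric, `b(r)·c(r) ≤ −m²` for all
`r ≥ 0`, with equality if and only if `r = 0`; in particular `b·c` is strictly decreasing
on `(0,∞)`. -/
theorem atiyah_hitchin_bc_le_neg_m_sq
    (m : ℝ) (hm : 0 < m)
    (a b c : ℝ → ℝ)
    (hca : ContinuousOn a (Set.Ici 0))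
    (hcb : ContinuousOn b (Set.Ici 0))
    (hcc : ContinuousOn c (Set.Ici 0))
    (hda : ∀ r > (0:ℝ),
      HasDerivAt a ((a r ^ 2 - (b r - c r) ^ 2) / (2 * b r * c r)) r)
    (hdb : ∀ r > (0:ℝ),
      HasDerivAt b ((b r ^ 2 - (c r - a r) ^ 2) / (2 * c r * a r)) r)
    (hdc : ∀ r > (0:ℝ),
      HasDerivAt c ((c r ^ 2 - (a r - b r) ^ 2) / (2 * a r * b r)) r)
    (hia : a 0 = 0) (hib : b 0 = -m) (hic : c 0 = m)
    (hapos : ∀ r > (0:ℝ), 0 < a r)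
    (hcpos : ∀ r > (0:ℝ), 0 < c r)
    (hbneg : ∀ r > (0:ℝ), b r < 0)
    (habc : ∀ r > (0:ℝ), b r + c r < a r) :
    (∀ r ≥ (0:ℝ), b r * c r ≤ -m ^ 2 ∧ (b r * c r = -m ^ 2 ↔ r = 0)) ∧
      StrictAntiOn (fun r => b r * c r) (Set.Ioi 0) :=
  atiyah_hitchin_bc_le_neg_m_sq_general m a b c hcb hcc hdb hdc hib hic hapos hcpos hbneg habc
end

section
/- As r → 0⁺ one has the asymptotic expansions a(r) = 2r − r³/(2m²) + O(r⁴), b(r) = −m + r/2 − 3r²/(8m) + O(r³), and c(r) = m + r/2 + 3r²/(8m) + O(r³). -/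
open Topology Asymptotics Filter Set

lemma AH_iterWithin (f : ℝ → ℝ) (hf : ContDiff ℝ (⊤ : ℕ∞) f) (k : ℕ) {x : ℝ}
    (hx : x ∈ Set.Icc (0:ℝ) 1) :
    iteratedDerivWithin k f (Set.Icc 0 1) x = iteratedDeriv k f x := by
  have H : HasFTaylorSeriesUpToOn (k : ℕ∞) f (ftaylorSeries ℝ f) (Set.Icc 0 1) :=
    ((contDiff_iff_ftaylorSeries.mp (hf.of_le (by exact_mod_cast le_top)))).hasFTaylorSeriesUpToOn _
  have := H.eq_iteratedFDerivWithin_of_uniqueDiffOn (le_refl _) (uniqueDiffOn_Icc one_pos) hx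
  rw [iteratedDerivWithin_eq_iteratedFDerivWithin, iteratedDeriv_eq_iteratedFDeriv, ← this]
  rfl

lemma AH_taylorO (f : ℝ → ℝ) (hf : ContDiff ℝ (⊤ : ℕ∞) f) (n : ℕ) :
    (fun x => f x - ∑ i ∈ Finset.range (n+1), (i.factorial : ℝ)⁻¹ * iteratedDeriv i f 0 * x ^ i)
      =O[𝓝[>] (0:ℝ)] fun x => x ^ (n+1) := by
  obtain ⟨C, hC⟩ := exists_taylor_mean_remainder_bound (zero_le_one)
    (hf.contDiffOn.of_le (by exact_mod_cast le_top) : ContDiffOn ℝ (n+1) f (Set.Icc 0 1))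
  rw [Asymptotics.isBigO_iff]
  refine ⟨C, ?_⟩
  filter_upwards [Ioc_mem_nhdsGT_of_mem ⟨le_refl 0, zero_lt_one⟩] with x hx
  have hx' : x ∈ Set.Icc (0:ℝ) 1 := ⟨hx.1.le, hx.2⟩
  have h := hC x hx'
  have hsum : taylorWithinEval f n (Set.Icc 0 1) 0 x
      = ∑ i ∈ Finset.range (n+1), (i.factorial : ℝ)⁻¹ * iteratedDeriv i f 0 * x ^ i := by
    rw [taylor_within_apply]
    refine Finset.sum_congr rfl fun i _ => ?_
    rw [AH_iterWithin f hf i (by norm_num : (0:ℝ) ∈ Set.Icc (0:ℝ) 1)]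
    simp [smul_eq_mul]; ring
  rw [hsum] at h
  calc ‖f x - ∑ i ∈ Finset.range (n+1), (i.factorial : ℝ)⁻¹ * iteratedDeriv i f 0 * x ^ i‖
      ≤ C * (x - 0) ^ (n+1) := h
    _ ≤ C * ‖x ^ (n+1)‖ := by
        rw [sub_zero, Real.norm_eq_abs, abs_pow, abs_of_pos hx.1]

lemma AH_taylor0 (f : ℝ → ℝ) (hf : ContDiff ℝ (⊤ : ℕ∞) f) :
    (fun x => f x - f 0) =O[𝓝[>] (0:ℝ)] fun x => x ^ 1 := by
  have h := AH_taylorO f hf 0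
  refine h.congr_left fun x => ?_
  simp [Finset.sum_range_succ]

lemma AH_taylor1 (f : ℝ → ℝ) (hf : ContDiff ℝ (⊤ : ℕ∞) f) :
    (fun x => f x - (f 0 + iteratedDeriv 1 f 0 * x)) =O[𝓝[>] (0:ℝ)] fun x => x ^ 2 := by
  have h := AH_taylorO f hf 1
  refine h.congr_left fun x => ?_
  have e0 : ((Nat.factorial 0 : ℕ) : ℝ)⁻¹ = 1 := by norm_num
  have e1 : ((Nat.factorial 1 : ℕ) : ℝ)⁻¹ = 1 := by norm_num
  have e2 : ((Nat.factorial 2 : ℕ) : ℝ)⁻¹ = 1/2 := by norm_num [Nat.factorial]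
  have e3 : ((Nat.factorial 3 : ℕ) : ℝ)⁻¹ = 1/6 := by norm_num [Nat.factorial]
  rw [Finset.sum_range_succ, Finset.sum_range_one, e0, e1]
  simp only [iteratedDeriv_zero]
  ring

lemma AH_taylor2 (f : ℝ → ℝ) (hf : ContDiff ℝ (⊤ : ℕ∞) f) :
    (fun x => f x - (f 0 + iteratedDeriv 1 f 0 * x + iteratedDeriv 2 f 0 / 2 * x ^ 2))
      =O[𝓝[>] (0:ℝ)] fun x => x ^ 3 := by
  have h := AH_taylorO f hf 2
  refine h.congr_left fun x => ?_
  have e0 : ((Nat.factorial 0 : ℕ) : ℝ)⁻¹ = 1 := by norm_num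
  have e1 : ((Nat.factorial 1 : ℕ) : ℝ)⁻¹ = 1 := by norm_num
  have e2 : ((Nat.factorial 2 : ℕ) : ℝ)⁻¹ = 1/2 := by norm_num [Nat.factorial]
  have e3 : ((Nat.factorial 3 : ℕ) : ℝ)⁻¹ = 1/6 := by norm_num [Nat.factorial]
  rw [Finset.sum_range_succ, Finset.sum_range_succ, Finset.sum_range_one, e0, e1, e2]
  simp only [iteratedDeriv_zero]
  ring

lemma AH_taylor3 (f : ℝ → ℝ) (hf : ContDiff ℝ (⊤ : ℕ∞) f) :
    (fun x => f x - (f 0 + iteratedDeriv 1 f 0 * x + iteratedDeriv 2 f 0 / 2 * x ^ 2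
      + iteratedDeriv 3 f 0 / 6 * x ^ 3)) =O[𝓝[>] (0:ℝ)] fun x => x ^ 4 := by
  have h := AH_taylorO f hf 3
  refine h.congr_left fun x => ?_
  have e0 : ((Nat.factorial 0 : ℕ) : ℝ)⁻¹ = 1 := by norm_num
  have e1 : ((Nat.factorial 1 : ℕ) : ℝ)⁻¹ = 1 := by norm_num
  have e2 : ((Nat.factorial 2 : ℕ) : ℝ)⁻¹ = 1/2 := by norm_num [Nat.factorial]
  have e3 : ((Nat.factorial 3 : ℕ) : ℝ)⁻¹ = 1/6 := by norm_num [Nat.factorial]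
  rw [Finset.sum_range_succ, Finset.sum_range_succ, Finset.sum_range_succ,
    Finset.sum_range_one, e0, e1, e2, e3]
  simp only [iteratedDeriv_zero]
  ring

lemma AH_tendsto_of_O {f : ℝ → ℝ} {n : ℕ}
    (h : f =O[𝓝[>] (0:ℝ)] fun x => x ^ (n+1)) : Tendsto f (𝓝[>] (0:ℝ)) (𝓝 0) := by
  refine h.trans_tendsto ?_
  have : Tendsto (fun x : ℝ => x ^ (n+1)) (𝓝 0) (𝓝 0) := by
    have := (continuous_pow (n+1)).tendsto (0:ℝ)
    simpa using this
  exact this.mono_left nhdsWithin_le_nhds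

lemma AH_const_zero {q : ℝ} {g : ℝ → ℝ} {n : ℕ}
    (h : (fun x => q + g x) =O[𝓝[>] (0:ℝ)] fun x => x ^ (n+1))
    (hg : Tendsto g (𝓝[>] (0:ℝ)) (𝓝 0)) : q = 0 := by
  have h1 : Tendsto (fun x => q + g x) (𝓝[>] (0:ℝ)) (𝓝 q) := by
    simpa using tendsto_const_nhds.add hg
  exact tendsto_nhds_unique h1 (AH_tendsto_of_O h)

lemma AH_shift_div {g : ℝ → ℝ} {n : ℕ}
    (h : (fun x => x * g x) =O[𝓝[>] (0:ℝ)] fun x => x ^ (n+1)) :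
    g =O[𝓝[>] (0:ℝ)] fun x => x ^ n := by
  have h2 := h.mul (isBigO_refl (fun x : ℝ => x⁻¹) (𝓝[>] (0:ℝ)))
  refine h2.congr' ?_ ?_
  · filter_upwards [self_mem_nhdsWithin] with x (hx : (0:ℝ) < x)
    field_simp
  · filter_upwards [self_mem_nhdsWithin] with x (hx : (0:ℝ) < x)
    have hx0 : x ≠ 0 := ne_of_gt hx
    field_simp [pow_succ]
    ring

lemma AH_extract3 {q0 q1 q2 : ℝ}
    (h : (fun x => q0 + q1 * x + q2 * x ^ 2) =O[𝓝[>] (0:ℝ)] fun x => x ^ 3) :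
    q0 = 0 ∧ q1 = 0 ∧ q2 = 0 := by
  have hcont : ∀ (u v : ℝ), Tendsto (fun x : ℝ => u * x + v * x ^ 2) (𝓝[>] (0:ℝ)) (𝓝 0) := by
    intro u v
    have : Continuous fun x : ℝ => u * x + v * x ^ 2 := by continuity
    have := (this.tendsto 0).mono_left (nhdsWithin_le_nhds (s := Set.Ioi (0:ℝ)))
    simpa using this
  have h0 : q0 = 0 := by
    refine AH_const_zero (g := fun x => q1 * x + q2 * x ^ 2) (n := 2) ?_ (hcont q1 q2)
    simpa [add_assoc] using h
  have h' : (fun x : ℝ => x * (q1 + q2 * x)) =O[𝓝[>] (0:ℝ)] fun x => x ^ 3 := by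
    refine h.congr_left fun x => ?_
    rw [h0]; ring
  have h2 := AH_shift_div (n := 2) h'
  have h1 : q1 = 0 := by
    refine AH_const_zero (g := fun x => q2 * x) (n := 1) h2 ?_
    have := hcont q2 0
    simpa using this
  have h'' : (fun x : ℝ => x * q2) =O[𝓝[>] (0:ℝ)] fun x => x ^ 2 := by
    refine h2.congr_left fun x => ?_
    rw [h1]; ring
  have h3 := AH_shift_div (n := 1) h''
  have hq2 : q2 = 0 := by
    refine AH_const_zero (g := fun _ => (0:ℝ)) (n := 0) ?_ tendsto_const_nhds
    simpa using h3
  exact ⟨h0, h1, hq2⟩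

lemma AH_mulO {f g : ℝ → ℝ} {n : ℕ} (hf : f =O[𝓝[>] (0:ℝ)] fun x => x ^ n)
    {L : ℝ} (hg : Tendsto g (𝓝[>] (0:ℝ)) (𝓝 L)) :
    (fun x => f x * g x) =O[𝓝[>] (0:ℝ)] fun x => x ^ n := by
  simpa using hf.mul (hg.isBigO_one ℝ)

lemma AH_powO {k n : ℕ} (hkn : k ≤ n) :
    (fun x : ℝ => x ^ n) =O[𝓝[>] (0:ℝ)] fun x => x ^ k := by
  rw [Asymptotics.isBigO_iff]
  refine ⟨1, ?_⟩
  filter_upwards [Ioc_mem_nhdsGT_of_mem ⟨le_refl 0, zero_lt_one⟩] with x hx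
  rw [Real.norm_eq_abs, Real.norm_eq_abs, abs_pow, abs_pow, abs_of_pos hx.1, one_mul]
  exact pow_le_pow_of_le_one hx.1.le hx.2 hkn

set_option maxHeartbeats 2000000 in
/-- Asymptotic expansions of the Atiyah–Hitchin coefficient functions as `r → 0⁺`:
`a(r) = 2r − r³/(2m²) + O(r⁴)`, `b(r) = −m + r/2 − 3r²/(8m) + O(r³)`, and
`c(r) = m + r/2 + 3r²/(8m) + O(r³)`. -/
theorem atiyah_hitchin_expansions_at_zero
    (m : ℝ) (hm : 0 < m)
    (a b c : ℝ → ℝ)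
    (hca : ContinuousOn a (Set.Ici 0))
    (hcb : ContinuousOn b (Set.Ici 0))
    (hcc : ContinuousOn c (Set.Ici 0))
    (hda : ∀ r > (0:ℝ),
      HasDerivAt a ((a r ^ 2 - (b r - c r) ^ 2) / (2 * b r * c r)) r)
    (hdb : ∀ r > (0:ℝ),
      HasDerivAt b ((b r ^ 2 - (c r - a r) ^ 2) / (2 * c r * a r)) r)
    (hdc : ∀ r > (0:ℝ),
      HasDerivAt c ((c r ^ 2 - (a r - b r) ^ 2) / (2 * a r * b r)) r)
    (hia : a 0 = 0) (hib : b 0 = -m) (hic : c 0 = m)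
    (hapos : ∀ r > (0:ℝ), 0 < a r)
    (hcpos : ∀ r > (0:ℝ), 0 < c r)
    (hbneg : ∀ r > (0:ℝ), b r < 0)
    (hsmooth : ∃ A B C : ℝ → ℝ, ContDiff ℝ (⊤ : ℕ∞) A ∧ ContDiff ℝ (⊤ : ℕ∞) B ∧ ContDiff ℝ (⊤ : ℕ∞) C ∧
      (∀ r ≥ (0:ℝ), a r = A r ∧ b r = B r ∧ c r = C r)) :
    ((fun r => a r - (2 * r - r ^ 3 / (2 * m ^ 2))) =O[𝓝[>] 0] fun r => r ^ 4) ∧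
    ((fun r => b r - (-m + r / 2 - 3 * r ^ 2 / (8 * m))) =O[𝓝[>] 0] fun r => r ^ 3) ∧
    ((fun r => c r - (m + r / 2 + 3 * r ^ 2 / (8 * m))) =O[𝓝[>] 0] fun r => r ^ 3) := by
  obtain ⟨A, B, C, hA, hB, hC, hE⟩ := hsmooth
  have hm0 : m ≠ 0 := ne_of_gt hm
  have hm2 : (m:ℝ)^2 ≠ 0 := pow_ne_zero 2 hm0
  have hA0 : A 0 = 0 := by rw [← (hE 0 le_rfl).1]; exact hia
  have hB0 : B 0 = -m := by rw [← (hE 0 le_rfl).2.1]; exact hib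
  have hC0 : C 0 = m := by rw [← (hE 0 le_rfl).2.2]; exact hic
  have hAi : ContDiff ℝ (⊤ : ℕ∞) A := hA.of_le (by simp)
  have hBi : ContDiff ℝ (⊤ : ℕ∞) B := hB.of_le (by simp)
  have hCi : ContDiff ℝ (⊤ : ℕ∞) C := hC.of_le (by simp)
  have cA : Continuous A := hAi.continuous
  have cB : Continuous B := hBi.continuous
  have cC : Continuous C := hCi.continuous
  have hA' : ContDiff ℝ (⊤ : ℕ∞) (deriv A) := (contDiff_infty_iff_deriv.mp hAi).2
  have hB' : ContDiff ℝ (⊤ : ℕ∞) (deriv B) := (contDiff_infty_iff_deriv.mp hBi).2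
  have hC' : ContDiff ℝ (⊤ : ℕ∞) (deriv C) := (contDiff_infty_iff_deriv.mp hCi).2
  -- transfer the ODE to the smooth extensions
  have hdA : ∀ x > (0:ℝ), deriv A x * (2 * B x * C x) = A x ^ 2 - (B x - C x) ^ 2 := by
    intro r hr
    have hev : A =ᶠ[𝓝 r] a := by
      filter_upwards [isOpen_Ioi.mem_nhds hr] with s hs
      exact ((hE s (le_of_lt hs)).1).symm
    have hd : HasDerivAt A ((a r ^ 2 - (b r - c r) ^ 2) / (2 * b r * c r)) r :=
      (hda r hr).congr_of_eventuallyEq hev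
    have hbne : b r ≠ 0 := ne_of_lt (hbneg r hr)
    have hcne : c r ≠ 0 := ne_of_gt (hcpos r hr)
    obtain ⟨ea, eb, ec⟩ := hE r (le_of_lt hr)
    rw [hd.deriv, ← ea, ← eb, ← ec]
    field_simp
  have hdB : ∀ x > (0:ℝ), deriv B x * (2 * C x * A x) = B x ^ 2 - (C x - A x) ^ 2 := by
    intro r hr
    have hev : B =ᶠ[𝓝 r] b := by
      filter_upwards [isOpen_Ioi.mem_nhds hr] with s hs
      exact ((hE s (le_of_lt hs)).2.1).symm
    have hd : HasDerivAt B ((b r ^ 2 - (c r - a r) ^ 2) / (2 * c r * a r)) r :=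
      (hdb r hr).congr_of_eventuallyEq hev
    have hane : a r ≠ 0 := ne_of_gt (hapos r hr)
    have hcne : c r ≠ 0 := ne_of_gt (hcpos r hr)
    obtain ⟨ea, eb, ec⟩ := hE r (le_of_lt hr)
    rw [hd.deriv, ← ea, ← eb, ← ec]
    field_simp
  have hdC : ∀ x > (0:ℝ), deriv C x * (2 * A x * B x) = C x ^ 2 - (A x - B x) ^ 2 := by
    intro r hr
    have hev : C =ᶠ[𝓝 r] c := by
      filter_upwards [isOpen_Ioi.mem_nhds hr] with s hs
      exact ((hE s (le_of_lt hs)).2.2).symm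
    have hd : HasDerivAt C ((c r ^ 2 - (a r - b r) ^ 2) / (2 * a r * b r)) r :=
      (hdc r hr).congr_of_eventuallyEq hev
    have hane : a r ≠ 0 := ne_of_gt (hapos r hr)
    have hbne : b r ≠ 0 := ne_of_lt (hbneg r hr)
    obtain ⟨ea, eb, ec⟩ := hE r (le_of_lt hr)
    rw [hd.deriv, ← ea, ← eb, ← ec]
    field_simp
  -- Taylor coefficients
  set a1 : ℝ := iteratedDeriv 1 A 0 with ha1d
  set a2 : ℝ := iteratedDeriv 2 A 0 / 2 with ha2d
  set a3 : ℝ := iteratedDeriv 3 A 0 / 6 with ha3d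
  set b1 : ℝ := iteratedDeriv 1 B 0 with hb1d
  set b2 : ℝ := iteratedDeriv 2 B 0 / 2 with hb2d
  set c1 : ℝ := iteratedDeriv 1 C 0 with hc1d
  set c2 : ℝ := iteratedDeriv 2 C 0 / 2 with hc2d
  have e2A : iteratedDeriv 2 A = iteratedDeriv 1 (deriv A) := iteratedDeriv_succ'
  have e3A : iteratedDeriv 3 A = iteratedDeriv 2 (deriv A) := iteratedDeriv_succ'
  have e2B : iteratedDeriv 2 B = iteratedDeriv 1 (deriv B) := iteratedDeriv_succ'
  have e2C : iteratedDeriv 2 C = iteratedDeriv 1 (deriv C) := iteratedDeriv_succ'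
  -- Taylor expansions with big-O remainders
  have tA : (fun x => A x - (a1*x + a2*x^2 + a3*x^3)) =O[𝓝[>] (0:ℝ)] fun x => x ^ 4 := by
    have h := AH_taylor3 A hAi
    refine h.congr_left fun x => ?_
    rw [hA0, ← ha1d, ← ha2d, ← ha3d]
    ring
  have tB : (fun x => B x - (-m + b1*x + b2*x^2)) =O[𝓝[>] (0:ℝ)] fun x => x ^ 3 := by
    have h := AH_taylor2 B hBi
    refine h.congr_left fun x => ?_
    rw [hB0, ← hb1d, ← hb2d]
  have tC : (fun x => C x - (m + c1*x + c2*x^2)) =O[𝓝[>] (0:ℝ)] fun x => x ^ 3 := by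
    have h := AH_taylor2 C hCi
    refine h.congr_left fun x => ?_
    rw [hC0, ← hc1d, ← hc2d]
  have tDA : (fun x => deriv A x - (a1 + 2*a2*x + 3*a3*x^2)) =O[𝓝[>] (0:ℝ)] fun x => x ^ 3 := by
    have d0 : deriv A 0 = a1 := by rw [ha1d, iteratedDeriv_one]
    have d1 : iteratedDeriv 1 (deriv A) 0 = 2*a2 := by rw [ha2d, ← e2A]; ring
    have d2 : iteratedDeriv 2 (deriv A) 0 = 6*a3 := by rw [ha3d, ← e3A]; ring
    have h := AH_taylor2 (deriv A) hA'
    refine h.congr_left fun x => ?_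
    rw [d0, d1, d2]; ring
  have tDB : (fun x => deriv B x - (b1 + 2*b2*x)) =O[𝓝[>] (0:ℝ)] fun x => x ^ 2 := by
    have d0 : deriv B 0 = b1 := by rw [hb1d, iteratedDeriv_one]
    have d1 : iteratedDeriv 1 (deriv B) 0 = 2*b2 := by rw [hb2d, ← e2B]; ring
    have h := AH_taylor1 (deriv B) hB'
    refine h.congr_left fun x => ?_
    rw [d0, d1]
  have tDC : (fun x => deriv C x - (c1 + 2*c2*x)) =O[𝓝[>] (0:ℝ)] fun x => x ^ 2 := by
    have d0 : deriv C 0 = c1 := by rw [hc1d, iteratedDeriv_one]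
    have d1 : iteratedDeriv 1 (deriv C) 0 = 2*c2 := by rw [hc2d, ← e2C]; ring
    have h := AH_taylor1 (deriv C) hC'
    refine h.congr_left fun x => ?_
    rw [d0, d1]
  have tA0 : (fun x => A x) =O[𝓝[>] (0:ℝ)] fun x => x ^ 1 := by
    have h := AH_taylor0 A hAi
    refine h.congr_left fun x => ?_
    rw [hA0, sub_zero]
  have tEA3 : (fun x => A x - (a1*x + a2*x^2 + a3*x^3)) =O[𝓝[>] (0:ℝ)] fun x => x ^ 3 :=
    tA.trans (AH_powO (by norm_num))
  have top : ∀ {g : ℝ → ℝ}, Continuous g → Tendsto g (𝓝[>] (0:ℝ)) (𝓝 (g 0)) :=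
    fun hg => (hg.tendsto 0).mono_left nhdsWithin_le_nhds
  have hx3 : (fun x : ℝ => x^2 * x^1) = fun x => x^3 := by funext x; ring
  -- the three polynomial identities with big-O error
  have hsumA : (fun x => (deriv A x - (a1 + 2*a2*x + 3*a3*x^2)) * (2 * B x * C x) + ((B x - (-m + b1*x + b2*x^2)) * C x + (C x - (m + c1*x + c2*x^2)) * (-m + b1*x + b2*x^2)) * (2 * (a1 + 2*a2*x + 3*a3*x^2)) - (A x - (a1*x + a2*x^2 + a3*x^3)) * (A x + (a1*x + a2*x^2 + a3*x^3)) + ((B x - (-m + b1*x + b2*x^2)) - (C x - (m + c1*x + c2*x^2))) * ((B x - C x) + ((-m + b1*x + b2*x^2) - (m + c1*x + c2*x^2)))) =O[𝓝[>] (0:ℝ)] fun x => x ^ 3 := by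
    exact (((AH_mulO tDA (top (by fun_prop))).add
      (AH_mulO ((AH_mulO tB (top cC)).add (AH_mulO tC (top (by fun_prop))))
        (top (by fun_prop)))).sub
      (AH_mulO tEA3 (top (by fun_prop)))).add
      (AH_mulO (tB.sub tC) (top (by fun_prop)))
  have hQA : (fun x => (a1 + 2*a2*x + 3*a3*x^2) * (2 * (-m + b1*x + b2*x^2) * (m + c1*x + c2*x^2)) - ((a1*x + a2*x^2 + a3*x^3)^2 - ((-m + b1*x + b2*x^2) - (m + c1*x + c2*x^2))^2)) =O[𝓝[>] (0:ℝ)] fun x => x ^ 3 := by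
    refine (hsumA.neg_left).congr' ?_ EventuallyEq.rfl
    filter_upwards [self_mem_nhdsWithin] with x hx
    linear_combination (-1 : ℝ) * hdA x hx
  have tEDBA : (fun x => (deriv B x - (b1 + 2*b2*x)) * A x) =O[𝓝[>] (0:ℝ)] fun x => x ^ 3 := by
    have h := tDB.mul tA0
    rwa [hx3] at h
  have hsumB : (fun x => ((deriv B x - (b1 + 2*b2*x)) * A x) * (2 * C x) + ((C x - (m + c1*x + c2*x^2)) * A x + (A x - (a1*x + a2*x^2 + a3*x^3)) * (m + c1*x + c2*x^2)) * (2 * (b1 + 2*b2*x)) - (B x - (-m + b1*x + b2*x^2)) * (B x + (-m + b1*x + b2*x^2)) + ((C x - (m + c1*x + c2*x^2)) - (A x - (a1*x + a2*x^2 + a3*x^3))) * ((C x - A x) + ((m + c1*x + c2*x^2) - (a1*x + a2*x^2 + a3*x^3)))) =O[𝓝[>] (0:ℝ)] fun x => x ^ 3 := by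
    exact (((AH_mulO tEDBA (top (by fun_prop))).add
      (AH_mulO ((AH_mulO tC (top cA)).add (AH_mulO tEA3 (top (by fun_prop))))
        (top (by fun_prop)))).sub
      (AH_mulO tB (top (by fun_prop)))).add
      (AH_mulO (tC.sub tEA3) (top (by fun_prop)))
  have hQB : (fun x => (b1 + 2*b2*x) * (2 * (m + c1*x + c2*x^2) * (a1*x + a2*x^2 + a3*x^3)) - ((-m + b1*x + b2*x^2)^2 - ((m + c1*x + c2*x^2) - (a1*x + a2*x^2 + a3*x^3))^2)) =O[𝓝[>] (0:ℝ)] fun x => x ^ 3 := by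
    refine (hsumB.neg_left).congr' ?_ EventuallyEq.rfl
    filter_upwards [self_mem_nhdsWithin] with x hx
    linear_combination (-1 : ℝ) * hdB x hx
  have tEDCA : (fun x => (deriv C x - (c1 + 2*c2*x)) * A x) =O[𝓝[>] (0:ℝ)] fun x => x ^ 3 := by
    have h := tDC.mul tA0
    rwa [hx3] at h
  have hsumC : (fun x => ((deriv C x - (c1 + 2*c2*x)) * A x) * (2 * B x) + ((A x - (a1*x + a2*x^2 + a3*x^3)) * B x + (B x - (-m + b1*x + b2*x^2)) * (a1*x + a2*x^2 + a3*x^3)) * (2 * (c1 + 2*c2*x)) - (C x - (m + c1*x + c2*x^2)) * (C x + (m + c1*x + c2*x^2)) + ((A x - (a1*x + a2*x^2 + a3*x^3)) - (B x - (-m + b1*x + b2*x^2))) * ((A x - B x) + ((a1*x + a2*x^2 + a3*x^3) - (-m + b1*x + b2*x^2)))) =O[𝓝[>] (0:ℝ)] fun x => x ^ 3 := by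
    exact (((AH_mulO tEDCA (top (by fun_prop))).add
      (AH_mulO ((AH_mulO tEA3 (top cB)).add (AH_mulO tB (top (by fun_prop))))
        (top (by fun_prop)))).sub
      (AH_mulO tC (top (by fun_prop)))).add
      (AH_mulO (tEA3.sub tB) (top (by fun_prop)))
  have hQC : (fun x => (c1 + 2*c2*x) * (2 * (a1*x + a2*x^2 + a3*x^3) * (-m + b1*x + b2*x^2)) - ((m + c1*x + c2*x^2)^2 - ((a1*x + a2*x^2 + a3*x^3) - (-m + b1*x + b2*x^2))^2)) =O[𝓝[>] (0:ℝ)] fun x => x ^ 3 := by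
    refine (hsumC.neg_left).congr' ?_ EventuallyEq.rfl
    filter_upwards [self_mem_nhdsWithin] with x hx
    linear_combination (-1 : ℝ) * hdC x hx
  -- extract the coefficient equations
  have hQA' : (fun x => ((-2)*a1*m^2 + (4)*m^2) + ((2)*a1*b1*m + (-2)*a1*c1*m + (-4)*a2*m^2 + (-4)*b1*m + (4)*c1*m) * x + ((2)*a1*b1*c1 + (2)*a1*b2*m + (-2)*a1*c2*m + (-1)*a1^2 + (4)*a2*b1*m + (-4)*a2*c1*m + (-6)*a3*m^2 + (-2)*b1*c1 + (1)*b1^2 + (-4)*b2*m + (1)*c1^2 + (4)*c2*m) * x ^ 2)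
      =O[𝓝[>] (0:ℝ)] fun x => x ^ 3 := by
    have htail : (fun x : ℝ => x^3 * (((-2)*a1*a2 + (2)*a1*b1*c2 + (2)*a1*b2*c1 + (4)*a2*b1*c1 + (4)*a2*b2*m + (-4)*a2*c2*m + (6)*a3*b1*m + (-6)*a3*c1*m + (2)*b1*b2 + (-2)*b1*c2 + (-2)*b2*c1 + (2)*c1*c2) + ((-2)*a1*a3 + (2)*a1*b2*c2 + (4)*a2*b1*c2 + (4)*a2*b2*c1 + (-1)*a2^2 + (6)*a3*b1*c1 + (6)*a3*b2*m + (-6)*a3*c2*m + (-2)*b2*c2 + (1)*b2^2 + (1)*c2^2)*x^1 + ((-2)*a2*a3 + (4)*a2*b2*c2 + (6)*a3*b1*c2 + (6)*a3*b2*c1)*x^2 + ((6)*a3*b2*c2 + (-1)*a3^2)*x^3)) =O[𝓝[>] (0:ℝ)] fun x => x ^ 3 :=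
      AH_mulO (isBigO_refl _ _) (top (by fun_prop))
    have hs := hQA.sub htail
    refine hs.congr_left fun x => ?_
    ring
  have hQB' : (fun x => ((0:ℝ)) + ((2)*a1*b1*m + (-2)*a1*m + (2)*b1*m + (2)*c1*m) * x + ((2)*a1*b1*c1 + (4)*a1*b2*m + (-2)*a1*c1 + (1)*a1^2 + (2)*a2*b1*m + (-2)*a2*m + (-1)*b1^2 + (2)*b2*m + (1)*c1^2 + (2)*c2*m) * x ^ 2)
      =O[𝓝[>] (0:ℝ)] fun x => x ^ 3 := by
    have htail : (fun x : ℝ => x^3 * (((2)*a1*a2 + (2)*a1*b1*c2 + (4)*a1*b2*c1 + (-2)*a1*c2 + (2)*a2*b1*c1 + (4)*a2*b2*m + (-2)*a2*c1 + (2)*a3*b1*m + (-2)*a3*m + (-2)*b1*b2 + (2)*c1*c2) + ((2)*a1*a3 + (4)*a1*b2*c2 + (2)*a2*b1*c2 + (4)*a2*b2*c1 + (-2)*a2*c2 + (1)*a2^2 + (2)*a3*b1*c1 + (4)*a3*b2*m + (-2)*a3*c1 + (-1)*b2^2 + (1)*c2^2)*x^1 + ((2)*a2*a3 + (4)*a2*b2*c2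 + (2)*a3*b1*c2 + (4)*a3*b2*c1 + (-2)*a3*c2)*x^2 + ((4)*a3*b2*c2 + (1)*a3^2)*x^3)) =O[𝓝[>] (0:ℝ)] fun x => x ^ 3 :=
      AH_mulO (isBigO_refl _ _) (top (by fun_prop))
    have hs := hQB.sub htail
    refine hs.congr_left fun x => ?_
    ring
  have hQC' : (fun x => ((0:ℝ)) + ((-2)*a1*c1*m + (2)*a1*m + (-2)*b1*m + (-2)*c1*m) * x + ((-2)*a1*b1 + (2)*a1*b1*c1 + (-4)*a1*c2*m + (1)*a1^2 + (-2)*a2*c1*m + (2)*a2*m + (1)*b1^2 + (-2)*b2*m + (-1)*c1^2 + (-2)*c2*m) * x ^ 2)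
      =O[𝓝[>] (0:ℝ)] fun x => x ^ 3 := by
    have htail : (fun x : ℝ => x^3 * (((2)*a1*a2 + (4)*a1*b1*c2 + (-2)*a1*b2 + (2)*a1*b2*c1 + (-2)*a2*b1 + (2)*a2*b1*c1 + (-4)*a2*c2*m + (-2)*a3*c1*m + (2)*a3*m + (2)*b1*b2 + (-2)*c1*c2) + ((2)*a1*a3 + (4)*a1*b2*c2 + (4)*a2*b1*c2 + (-2)*a2*b2 + (2)*a2*b2*c1 + (1)*a2^2 + (-2)*a3*b1 + (2)*a3*b1*c1 + (-4)*a3*c2*m + (1)*b2^2 + (-1)*c2^2)*x^1 + ((2)*a2*a3 + (4)*a2*b2*c2 + (4)*a3*b1*c2 + (-2)*a3*b2 + (2)*a3*b2*c1)*x^2 + ((4)*a3*b2*c2 + (1)*a3^2)*x^3)) =O[𝓝[>] (0:ℝ)] fun x => x ^ 3 :=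
      AH_mulO (isBigO_refl _ _) (top (by fun_prop))
    have hs := hQC.sub htail
    refine hs.congr_left fun x => ?_
    ring
  obtain ⟨eA0, eA1, eA2⟩ := AH_extract3 hQA'
  obtain ⟨-, eB1, eB2⟩ := AH_extract3 hQB'
  obtain ⟨-, eC1, eC2⟩ := AH_extract3 hQC'
  -- solve for the coefficients
  have Ha1 : a1 = 2 := by
    have h : m^2 * (a1 - 2) = 0 := by linear_combination (-1/2 : ℝ) * eA0
    rcases mul_eq_zero.mp h with h' | h'
    · exact absurd h' hm2
    · linarith
  rw [Ha1] at eA1 eB1 eC1 eA2 eB2 eC2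
  have hb1c1 : 6*b1 + 2*c1 - 4 = 0 := by
    have h : m * (6*b1 + 2*c1 - 4) = 0 := by linear_combination eB1
    rcases mul_eq_zero.mp h with h' | h'
    · exact absurd h' hm0
    · exact h'
  have hb1c1' : -2*b1 - 6*c1 + 4 = 0 := by
    have h : m * (-2*b1 - 6*c1 + 4) = 0 := by linear_combination eC1
    rcases mul_eq_zero.mp h with h' | h'
    · exact absurd h' hm0
    · exact h'
  have Hb1 : b1 = 1/2 := by linarith
  have Hc1 : c1 = 1/2 := by linarith
  rw [Hb1, Hc1] at eA1 eA2 eB2 eC2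
  have Ha2 : a2 = 0 := by
    have h : m^2 * a2 = 0 := by linear_combination (-1/4 : ℝ) * eA1
    rcases mul_eq_zero.mp h with h' | h'
    · exact absurd h' hm2
    · exact h'
  rw [Ha2] at eA2 eB2 eC2
  have Hmb2 : m * b2 = -(3/8) := by linear_combination (5/48 : ℝ) * eB2 + (1/48 : ℝ) * eC2
  have Hmc2 : m * c2 = 3/8 := by linear_combination (-1/48 : ℝ) * eB2 + (-5/48 : ℝ) * eC2
  have Ha3m : m^2 * a3 = -(1/2) := by linear_combination (-1/6 : ℝ) * eA2
  have Hb2 : b2 = -3/(8*m) := by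
    field_simp
    linarith [Hmb2]
  have Hc2 : c2 = 3/(8*m) := by
    field_simp
    linarith [Hmc2]
  have Ha3 : a3 = -1/(2*m^2) := by
    field_simp
    linarith [Ha3m]
  -- assemble the final asymptotics
  refine ⟨?_, ?_, ?_⟩
  · refine tA.congr' ?_ EventuallyEq.rfl
    filter_upwards [self_mem_nhdsWithin] with x hx
    rw [(hE x (le_of_lt hx)).1, Ha1, Ha2, Ha3]
    ring
  · refine tB.congr' ?_ EventuallyEq.rfl
    filter_upwards [self_mem_nhdsWithin] with x hx
    rw [(hE x (le_of_lt hx)).2.1, Hb1, Hb2]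
    ring
  · refine tC.congr' ?_ EventuallyEq.rfl
    filter_upwards [self_mem_nhdsWithin] with x hx
    rw [(hE x (le_of_lt hx)).2.2, Hc1, Hc2]
    ring
end

section
/- One has lim_{r→0⁺} κ(a(r), b(r), c(r)) = −3/(2m²), lim_{r→0⁺} κ(b(r), c(r), a(r)) = 3/(4m²), and lim_{r→0⁺} κ(c(r), a(r), b(r)) = 3/(4m²). -/
open Topology

open Filter Set

lemma slope_right {F : ℝ → ℝ} {d : ℝ} (h : HasDerivAt F d 0) (h0 : F 0 = 0) :
    Filter.Tendsto (fun r => F r / r) (𝓝[>] (0:ℝ)) (𝓝 d) := by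
  have h1 := hasDerivAt_iff_tendsto_slope.mp h
  have h2 : Filter.Tendsto (slope F 0) (𝓝[>] (0:ℝ)) (𝓝 d) :=
    h1.mono_left (nhdsWithin_mono _ (fun x hx => ne_of_gt hx))
  refine h2.congr fun r => ?_
  simp [slope_def_field, h0]

lemma tendsto_comp4 {f : ℝ → ℝ → ℝ → ℝ → ℝ}
    (hf : Continuous fun p : ℝ × ℝ × ℝ × ℝ => f p.1 p.2.1 p.2.2.1 p.2.2.2)
    {l : Filter ℝ} {u v w x : ℝ → ℝ} {p q s t : ℝ}
    (hu : Tendsto u l (𝓝 p)) (hv : Tendsto v l (𝓝 q))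
    (hw : Tendsto w l (𝓝 s)) (hx : Tendsto x l (𝓝 t)) :
    Tendsto (fun r => f (u r) (v r) (w r) (x r)) l (𝓝 (f p q s t)) :=
  (hf.tendsto (p, q, s, t)).comp
    (hu.prodMk_nhds (hv.prodMk_nhds (hw.prodMk_nhds hx)))

lemma taylor2 {F : ℝ → ℝ} (hF : ContDiff ℝ (⊤ : ℕ∞) F) :
    Filter.Tendsto
      (fun r => (F r - F 0 - deriv F 0 * r - deriv (deriv F) 0 / 2 * r ^ 2) / r ^ 2)
      (𝓝[>] (0:ℝ)) (𝓝 0) := by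
  have hdA : Differentiable ℝ F := hF.differentiable (by norm_num)
  have hF' : ContDiff ℝ (⊤ : ℕ∞) (deriv F) := (contDiff_infty_iff_deriv.mp hF).2
  have hdA' : Differentiable ℝ (deriv F) := hF'.differentiable (by norm_num)
  set c := deriv (deriv F) 0 with hc
  set G := fun r : ℝ => F r - F 0 - deriv F 0 * r - c / 2 * r ^ 2 with hG
  have hG' : ∀ x : ℝ, HasDerivAt G (deriv F x - deriv F 0 - c * x) x := by
    intro x
    have h1 := (((hdA x).hasDerivAt.sub_const (F 0)).sub
        ((hasDerivAt_id x).const_mul (deriv F 0))).sub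
        ((hasDerivAt_pow 2 x).const_mul (c / 2))
    exact h1.congr_deriv (by push_cast; ring)
  have hdiv : Filter.Tendsto (fun x => (deriv F x - deriv F 0 - c * x) / (2 * x))
      (𝓝[>] (0:ℝ)) (𝓝 0) := by
    have hsl : Filter.Tendsto (fun r => (deriv F r - deriv F 0) / r) (𝓝[>] (0:ℝ)) (𝓝 c) :=
      slope_right (by exact ((hdA' 0).hasDerivAt.sub_const (deriv F 0))) (by simp)
    have := (hsl.sub_const c).div_const 2
    rw [sub_self, zero_div] at this
    refine this.congr' ?_
    filter_upwards [self_mem_nhdsWithin] with r (hr : 0 < r)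
    field_simp
  have hfa : Filter.Tendsto G (𝓝[>] (0:ℝ)) (𝓝 0) := by
    have hcont : Continuous G := by
      apply Continuous.sub
      apply Continuous.sub
      apply Continuous.sub hdA.continuous continuous_const
      · exact continuous_const.mul continuous_id
      · exact continuous_const.mul (continuous_pow 2)
    have := (hcont.tendsto 0).mono_left (nhdsWithin_le_nhds (s := Set.Ioi (0:ℝ)))
    simpa [hG] using this
  have hga : Filter.Tendsto (fun r : ℝ => r ^ 2) (𝓝[>] (0:ℝ)) (𝓝 0) := by
    have : Filter.Tendsto (fun r : ℝ => r ^ 2) (𝓝 (0:ℝ)) (𝓝 0) := by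
      simpa using (continuous_pow 2).tendsto (0:ℝ)
    exact this.mono_left nhdsWithin_le_nhds
  exact HasDerivAt.lhopital_zero_nhdsGT
    (Filter.Eventually.of_forall fun x => hG' x)
    (Filter.Eventually.of_forall fun x => (hasDerivAt_pow 2 x).congr_deriv (by push_cast; ring))
    (by filter_upwards [self_mem_nhdsWithin] with x (hx : 0 < x); positivity)
    hfa hga hdiv

-- Qb: 11 monomials
noncomputable def Qbf (m : ℝ) (r x y z : ℝ) : ℝ :=
  (-3) + (-2)*z*m + (-2)*y*m + (1)*x*m + (1)*r*z + (1)*r*y + (-7/2)*r*x + (-1)*r^2*z^2 + (1)*r^2*y^2 + (1)*r^2*x*z + (-1)*r^2*x^2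

-- Qc: 11 monomials
noncomputable def Qcf (m : ℝ) (r x y z : ℝ) : ℝ :=
  (-3) + (2)*z*m + (2)*y*m + (-1)*x*m + (1)*r*z + (1)*r*y + (-7/2)*r*x + (1)*r^2*z^2 + (-1)*r^2*y^2 + (1)*r^2*x*y + (-1)*r^2*x^2

-- Q1: 49 monomials
noncomputable def Q1f (m : ℝ) (r x y z : ℝ) : ℝ :=
  (-12)*m^2 + (-12)*r*x*m^2 + (24)*r^2 + (-12)*r^2*z*m + (-4)*r^2*z^2*m^2 + (12)*r^2*y*m + (-8)*r^2*y*z*m^2 + (-4)*r^2*y^2*m^2 + (4)*r^2*x*z*m^2 + (4)*r^2*x*y*m^2 + (-4)*r^2*x^2*m^2 + (-8)*r^3*z + (-8)*r^3*y + (52)*r^3*x + (-12)*r^3*x*z*m + (12)*r^3*x*y*m + (-3)*r^4*z^2 + (-4)*r^4*z^3*m + (6)*r^4*y*z + (-4)*r^4*y*z^2*m + (-3)*r^4*y^2 + (4)*r^4*y^2*z*m + (4)*r^4*y^3*m + (-12)*r^4*x*z + (4)*r^4*x*z^2*m + (-12)*r^4*x*y + (-4)*r^4*x*y^2*m + (42)*r^4*x^2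 + (-4)*r^4*x^2*z*m + (4)*r^4*x^2*y*m + (-3)*r^5*x*z^2 + (6)*r^5*x*y*z + (-3)*r^5*x*y^2 + (-6)*r^5*x^2*z + (-6)*r^5*x^2*y + (15)*r^5*x^3 + (-1)*r^6*z^4 + (2)*r^6*y^2*z^2 + (-1)*r^6*y^4 + (1)*r^6*x*z^3 + (-1)*r^6*x*y*z^2 + (-1)*r^6*x*y^2*z + (1)*r^6*x*y^3 + (-1)*r^6*x^2*z^2 + (2)*r^6*x^2*y*z + (-1)*r^6*x^2*y^2 + (-1)*r^6*x^3*z + (-1)*r^6*x^3*y + (2)*r^6*x^4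

-- Q2: 63 monomials
noncomputable def Q2f (m : ℝ) (r x y z : ℝ) : ℝ :=
  (6)*m^2 + (-8)*z*m^3 + (-8)*y*m^3 + (4)*x*m^3 + (3)*r*m + (6)*r*x*m^2 + (-12)*r^2 + (15)*r^2*z*m + (-10)*r^2*z^2*m^2 + (3)*r^2*y*m + (4)*r^2*y*z*m^2 + (14)*r^2*y^2*m^2 + (4)*r^2*x*z*m^2 + (-8)*r^2*x*y*m^2 + (2)*r^2*x^2*m^2 + (11/2)*r^3*z + (-3)*r^3*z^2*m + (5/2)*r^3*y + (-6)*r^3*y*z*m + (-3)*r^3*y^2*m + (-26)*r^3*x + (18)*r^3*x*z*m + (6)*r^3*x*y*m + (-3)*r^3*x^2*m + (6)*r^4*z^2 + (-5)*r^4*z^3*m + (-3)*r^4*y*z + (5)*r^4*y*z^2*m + (-3)*r^4*y^2 + (1)*r^4*y^2*z*m + (-9)*r^4*y^3*m + (6)*r^4*x*z + (1)*r^4*x*z^2*m + (6)*r^4*x*y + (-6)*r^4*x*y*z*m + (5)*r^4*x*y^2*m + (-21)*r^4*x^2 + (5)*r^4*x^2*z*m + (1)*r^4*x^2*y*m + (-1)*r^4*x^3*m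 + (-3/2)*r^5*z^3 + (-3/2)*r^5*y*z^2 + (3/2)*r^5*y^2*z + (3/2)*r^5*y^3 + (15/2)*r^5*x*z^2 + (-3)*r^5*x*y*z + (-9/2)*r^5*x*y^2 + (3/2)*r^5*x^2*z + (9/2)*r^5*x^2*y + (-15/2)*r^5*x^3 + (-1)*r^6*z^4 + (1)*r^6*y*z^3 + (-1)*r^6*y^2*z^2 + (-1)*r^6*y^3*z + (2)*r^6*y^4 + (-1)*r^6*x*y*z^2 + (2)*r^6*x*y^2*z + (-1)*r^6*x*y^3 + (2)*r^6*x^2*z^2 + (-1)*r^6*x^2*y*z + (-1)*r^6*x^2*y^2 + (1)*r^6*x^3*y + (-1)*r^6*x^4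

-- Q3: 63 monomials
noncomputable def Q3f (m : ℝ) (r x y z : ℝ) : ℝ :=
  (6)*m^2 + (8)*z*m^3 + (8)*y*m^3 + (-4)*x*m^3 + (-3)*r*m + (6)*r*x*m^2 + (-12)*r^2 + (-3)*r^2*z*m + (14)*r^2*z^2*m^2 + (-15)*r^2*y*m + (4)*r^2*y*z*m^2 + (-10)*r^2*y^2*m^2 + (-8)*r^2*x*z*m^2 + (4)*r^2*x*y*m^2 + (2)*r^2*x^2*m^2 + (5/2)*r^3*z + (3)*r^3*z^2*m + (11/2)*r^3*y + (6)*r^3*y*z*m + (3)*r^3*y^2*m + (-26)*r^3*x + (-6)*r^3*x*z*m + (-18)*r^3*x*y*m + (3)*r^3*x^2*m + (-3)*r^4*z^2 + (9)*r^4*z^3*m + (-3)*r^4*y*z + (-1)*r^4*y*z^2*m + (6)*r^4*y^2 + (-5)*r^4*y^2*z*m + (5)*r^4*y^3*m + (6)*r^4*x*z + (-5)*r^4*x*z^2*m + (6)*r^4*x*y + (6)*r^4*x*y*z*m + (-1)*r^4*x*y^2*m + (-21)*r^4*x^2 + (-1)*r^4*x^2*z*m + (-5)*r^4*x^2*y*m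 + (1)*r^4*x^3*m + (3/2)*r^5*z^3 + (3/2)*r^5*y*z^2 + (-3/2)*r^5*y^2*z + (-3/2)*r^5*y^3 + (-9/2)*r^5*x*z^2 + (-3)*r^5*x*y*z + (15/2)*r^5*x*y^2 + (9/2)*r^5*x^2*z + (3/2)*r^5*x^2*y + (-15/2)*r^5*x^3 + (2)*r^6*z^4 + (-1)*r^6*y*z^3 + (-1)*r^6*y^2*z^2 + (1)*r^6*y^3*z + (-1)*r^6*y^4 + (-1)*r^6*x*z^3 + (2)*r^6*x*y*z^2 + (-1)*r^6*x*y^2*z + (-1)*r^6*x^2*z^2 + (-1)*r^6*x^2*y*z + (2)*r^6*x^2*y^2 + (1)*r^6*x^3*z + (-1)*r^6*x^4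


set_option maxHeartbeats 4000000 in
/-- As `r → 0⁺`, `κ(a(r),b(r),c(r)) → −3/(2m²)`, while
`κ(b(r),c(r),a(r)) → 3/(4m²)` and `κ(c(r),a(r),b(r)) → 3/(4m²)`. -/
theorem atiyah_hitchin_kappa_limits_at_zero
    (m : ℝ) (hm : 0 < m)
    (a b c : ℝ → ℝ)
    (hca : ContinuousOn a (Set.Ici 0))
    (hcb : ContinuousOn b (Set.Ici 0))
    (hcc : ContinuousOn c (Set.Ici 0))
    (hda : ∀ r > (0:ℝ),
      HasDerivAt a ((a r ^ 2 - (b r - c r) ^ 2) / (2 * b r * c r)) r)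
    (hdb : ∀ r > (0:ℝ),
      HasDerivAt b ((b r ^ 2 - (c r - a r) ^ 2) / (2 * c r * a r)) r)
    (hdc : ∀ r > (0:ℝ),
      HasDerivAt c ((c r ^ 2 - (a r - b r) ^ 2) / (2 * a r * b r)) r)
    (hia : a 0 = 0) (hib : b 0 = -m) (hic : c 0 = m)
    (hapos : ∀ r > (0:ℝ), 0 < a r)
    (hcpos : ∀ r > (0:ℝ), 0 < c r)
    (hbneg : ∀ r > (0:ℝ), b r < 0)
    (hsmooth : ∃ A B C : ℝ → ℝ, ContDiff ℝ (⊤ : ℕ∞) A ∧ ContDiff ℝ (⊤ : ℕ∞) B ∧ ContDiff ℝ (⊤ : ℕ∞) C ∧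
      (∀ r ≥ (0:ℝ), a r = A r ∧ b r = B r ∧ c r = C r)) :
    Filter.Tendsto (fun r => kappa (a r) (b r) (c r)) (𝓝[>] 0)
        (𝓝 (-3 / (2 * m ^ 2))) ∧
    Filter.Tendsto (fun r => kappa (b r) (c r) (a r)) (𝓝[>] 0)
        (𝓝 (3 / (4 * m ^ 2))) ∧
    Filter.Tendsto (fun r => kappa (c r) (a r) (b r)) (𝓝[>] 0)
        (𝓝 (3 / (4 * m ^ 2))) := by
  classical
  have hm' : m ≠ 0 := ne_of_gt hm
  obtain ⟨A, B, C, hA, hB, hC, hEqn⟩ := hsmooth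
  have hA' : ContDiff ℝ ((⊤:ℕ∞) : WithTop ℕ∞) A := hA.of_le (by simp)
  have hB' : ContDiff ℝ ((⊤:ℕ∞) : WithTop ℕ∞) B := hB.of_le (by simp)
  have hC' : ContDiff ℝ ((⊤:ℕ∞) : WithTop ℕ∞) C := hC.of_le (by simp)
  have haA : ∀ r ≥ (0:ℝ), a r = A r := fun r hr => (hEqn r hr).1
  have hbB : ∀ r ≥ (0:ℝ), b r = B r := fun r hr => (hEqn r hr).2.1
  have hcC : ∀ r ≥ (0:ℝ), c r = C r := fun r hr => (hEqn r hr).2.2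
  have hA0 : A 0 = 0 := by rw [← haA 0 le_rfl]; exact hia
  have hB0 : B 0 = -m := by rw [← hbB 0 le_rfl]; exact hib
  have hC0 : C 0 = m := by rw [← hcC 0 le_rfl]; exact hic
  have hApos : ∀ r > (0:ℝ), 0 < A r := fun r hr => (haA r hr.le) ▸ hapos r hr
  have hCpos : ∀ r > (0:ℝ), 0 < C r := fun r hr => (hcC r hr.le) ▸ hcpos r hr
  have hBneg : ∀ r > (0:ℝ), B r < 0 := fun r hr => (hbB r hr.le) ▸ hbneg r hr
  have dA : Differentiable ℝ A := hA'.differentiable (by norm_num)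
  have dB : Differentiable ℝ B := hB'.differentiable (by norm_num)
  have dC : Differentiable ℝ C := hC'.differentiable (by norm_num)
  have cA' : Continuous (deriv A) := hA'.continuous_deriv (by norm_num)
  have cB' : Continuous (deriv B) := hB'.continuous_deriv (by norm_num)
  have cC' : Continuous (deriv C) := hC'.continuous_deriv (by norm_num)
  have dA' : Differentiable ℝ (deriv A) :=
    ((contDiff_infty_iff_deriv.mp hA').2).differentiable (by norm_num)
  have dB' : Differentiable ℝ (deriv B) :=
    ((contDiff_infty_iff_deriv.mp hB').2).differentiable (by norm_num)
  have dC' : Differentiable ℝ (deriv C) :=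
    ((contDiff_infty_iff_deriv.mp hC').2).differentiable (by norm_num)
  -- identify the derivatives on the positive axis
  have hdA : ∀ r > (0:ℝ), deriv A r = (A r ^ 2 - (B r - C r) ^ 2) / (2 * B r * C r) := by
    intro r hr
    have hev : A =ᶠ[𝓝 r] a := by
      filter_upwards [Ioi_mem_nhds hr] with x (hx : 0 < x); exact (haA x hx.le).symm
    have h1 : HasDerivAt A ((a r ^ 2 - (b r - c r) ^ 2) / (2 * b r * c r)) r :=
      (hda r hr).congr_of_eventuallyEq hev
    rw [haA r hr.le, hbB r hr.le, hcC r hr.le] at h1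
    exact h1.deriv
  have hdB : ∀ r > (0:ℝ), deriv B r = (B r ^ 2 - (C r - A r) ^ 2) / (2 * C r * A r) := by
    intro r hr
    have hev : B =ᶠ[𝓝 r] b := by
      filter_upwards [Ioi_mem_nhds hr] with x (hx : 0 < x); exact (hbB x hx.le).symm
    have h1 : HasDerivAt B ((b r ^ 2 - (c r - a r) ^ 2) / (2 * c r * a r)) r :=
      (hdb r hr).congr_of_eventuallyEq hev
    rw [haA r hr.le, hbB r hr.le, hcC r hr.le] at h1
    exact h1.deriv
  have hdC : ∀ r > (0:ℝ), deriv C r = (C r ^ 2 - (A r - B r) ^ 2) / (2 * A r * B r) := by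
    intro r hr
    have hev : C =ᶠ[𝓝 r] c := by
      filter_upwards [Ioi_mem_nhds hr] with x (hx : 0 < x); exact (hcC x hx.le).symm
    have h1 : HasDerivAt C ((c r ^ 2 - (a r - b r) ^ 2) / (2 * a r * b r)) r :=
      (hdc r hr).congr_of_eventuallyEq hev
    rw [haA r hr.le, hbB r hr.le, hcC r hr.le] at h1
    exact h1.deriv
  -- basic limits by continuity
  have tA : Tendsto A (𝓝[>] (0:ℝ)) (𝓝 0) := by
    have := (hA'.continuous.tendsto 0).mono_left (nhdsWithin_le_nhds (s := Set.Ioi (0:ℝ)))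
    rwa [hA0] at this
  have tB : Tendsto B (𝓝[>] (0:ℝ)) (𝓝 (-m)) := by
    have := (hB'.continuous.tendsto 0).mono_left (nhdsWithin_le_nhds (s := Set.Ioi (0:ℝ)))
    rwa [hB0] at this
  have tC : Tendsto C (𝓝[>] (0:ℝ)) (𝓝 m) := by
    have := (hC'.continuous.tendsto 0).mono_left (nhdsWithin_le_nhds (s := Set.Ioi (0:ℝ)))
    rwa [hC0] at this
  -- Step 1 : deriv A 0 = 2
  have tdA : Tendsto (deriv A) (𝓝[>] (0:ℝ)) (𝓝 (deriv A 0)) :=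
    (cA'.tendsto 0).mono_left nhdsWithin_le_nhds
  have tfa : Tendsto (fun r => (A r ^ 2 - (B r - C r) ^ 2) / (2 * B r * C r))
      (𝓝[>] (0:ℝ)) (𝓝 2) := by
    have h1 : Tendsto (fun r => A r ^ 2 - (B r - C r) ^ 2) (𝓝[>] (0:ℝ))
        (𝓝 ((0:ℝ) ^ 2 - (-m - m) ^ 2)) := (tA.pow 2).sub ((tB.sub tC).pow 2)
    have h2 : Tendsto (fun r => 2 * B r * C r) (𝓝[>] (0:ℝ)) (𝓝 (2 * (-m) * m)) :=
      (tendsto_const_nhds.mul tB).mul tC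
    have h3 : 2 * (-m) * m ≠ 0 := by nlinarith [sq_nonneg m, hm]
    have h4 := h1.div h2 h3
    have e : (0 ^ 2 - (-m - m) ^ 2) / (2 * -m * m) = (2:ℝ) := by
      rw [div_eq_iff h3]
      ring
    rw [e] at h4
    exact h4
  have dA0 : deriv A 0 = 2 := by
    refine tendsto_nhds_unique (tdA.congr' ?_) tfa
    filter_upwards [self_mem_nhdsWithin] with r (hr : 0 < r)
    exact hdA r hr
  have sA : Tendsto (fun r => A r / r) (𝓝[>] (0:ℝ)) (𝓝 2) :=
    slope_right (dA0 ▸ (dA 0).hasDerivAt) hA0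
  -- Step 2 : deriv B 0 = deriv C 0 = 1/2
  have sBCA : Tendsto (fun r => (B r + C r - A r) / r) (𝓝[>] (0:ℝ))
      (𝓝 (deriv B 0 + deriv C 0 - 2)) := by
    refine slope_right ?_ (by rw [hA0, hB0, hC0]; ring)
    have h := (((dB 0).hasDerivAt.add (dC 0).hasDerivAt).sub (dA 0).hasDerivAt)
    rwa [dA0] at h
  have trCA : Tendsto (fun r => r / (2 * C r * A r)) (𝓝[>] (0:ℝ)) (𝓝 (1 / (2 * m * 2))) := by
    have h2 : Tendsto (fun r => 2 * C r * (A r / r)) (𝓝[>] (0:ℝ)) (𝓝 (2 * m * 2)) :=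
      (tendsto_const_nhds.mul tC).mul sA
    have h3 : 2 * m * 2 ≠ 0 := by positivity
    have h4 := (tendsto_const_nhds (x := (1:ℝ))).div h2 h3
    refine h4.congr' ?_
    filter_upwards [self_mem_nhdsWithin] with r (hr : 0 < r)
    have hAne := (hApos r hr).ne'
    have hCne := (hCpos r hr).ne'
    simp only [Pi.div_apply]
    field_simp
  have trAB : Tendsto (fun r => r / (2 * A r * B r)) (𝓝[>] (0:ℝ))
      (𝓝 (1 / (2 * 2 * (-m)))) := by
    have h2 : Tendsto (fun r => 2 * (A r / r) * B r) (𝓝[>] (0:ℝ)) (𝓝 (2 * 2 * (-m))) :=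
      (tendsto_const_nhds.mul sA).mul tB
    have h3 : 2 * 2 * (-m) ≠ 0 := by simp [hm']
    have h4 := (tendsto_const_nhds (x := (1:ℝ))).div h2 h3
    refine h4.congr' ?_
    filter_upwards [self_mem_nhdsWithin] with r (hr : 0 < r)
    have hAne := (hApos r hr).ne'
    have hBne := (hBneg r hr).ne
    simp only [Pi.div_apply]
    field_simp
  have tfb : Tendsto (fun r => (B r ^ 2 - (C r - A r) ^ 2) / (2 * C r * A r)) (𝓝[>] (0:ℝ))
      (𝓝 ((-m - m + 0) * (deriv B 0 + deriv C 0 - 2) * (1 / (2 * m * 2)))) := by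
    have h := (((tB.sub tC).add tA).mul sBCA).mul trCA
    refine h.congr' ?_
    filter_upwards [self_mem_nhdsWithin] with r (hr : 0 < r)
    have hAne := (hApos r hr).ne'
    have hCne := (hCpos r hr).ne'
    field_simp
    ring
  have tfc : Tendsto (fun r => (C r ^ 2 - (A r - B r) ^ 2) / (2 * A r * B r)) (𝓝[>] (0:ℝ))
      (𝓝 ((deriv B 0 + deriv C 0 - 2) * (m + 0 - -m) * (1 / (2 * 2 * (-m))))) := by
    have h := (sBCA.mul ((tC.add tA).sub tB)).mul trAB
    refine h.congr' ?_
    filter_upwards [self_mem_nhdsWithin] with r (hr : 0 < r)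
    have hAne := (hApos r hr).ne'
    have hBne := (hBneg r hr).ne
    field_simp
    ring
  have hDBeq : deriv B 0 = (-m - m + 0) * (deriv B 0 + deriv C 0 - 2) * (1 / (2 * m * 2)) := by
    refine tendsto_nhds_unique (((cB'.tendsto 0).mono_left nhdsWithin_le_nhds).congr' ?_) tfb
    filter_upwards [self_mem_nhdsWithin] with r (hr : 0 < r)
    exact hdB r hr
  have hDCeq : deriv C 0 = (deriv B 0 + deriv C 0 - 2) * (m + 0 - -m) * (1 / (2 * 2 * (-m))) := by
    refine tendsto_nhds_unique (((cC'.tendsto 0).mono_left nhdsWithin_le_nhds).congr' ?_) tfc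
    filter_upwards [self_mem_nhdsWithin] with r (hr : 0 < r)
    exact hdC r hr
  have e1 : deriv B 0 = -(deriv B 0 + deriv C 0 - 2) / 2 := by
    nth_rewrite 1 [hDBeq]; field_simp; ring
  have e2 : deriv C 0 = -(deriv B 0 + deriv C 0 - 2) / 2 := by
    nth_rewrite 1 [hDCeq]; field_simp; ring
  have dB0 : deriv B 0 = 1 / 2 := by linarith
  have dC0 : deriv C 0 = 1 / 2 := by linarith
  -- Step 3 : second derivative of A at 0 is 0
  have sAmBC : Tendsto (fun r => (A r - B r - C r) / r) (𝓝[>] (0:ℝ)) (𝓝 1) := by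
    refine slope_right ?_ (by rw [hA0, hB0, hC0]; ring)
    have h := (((dA 0).hasDerivAt.sub (dB 0).hasDerivAt).sub (dC 0).hasDerivAt)
    rw [dA0, dB0, dC0] at h
    norm_num at h
    exact h
  have sdA : Tendsto (fun r => (deriv A r - 2) / r) (𝓝[>] (0:ℝ)) (𝓝 (deriv (deriv A) 0)) := by
    refine slope_right ?_ (by rw [dA0]; ring)
    simpa using ((dA' 0).hasDerivAt.sub_const 2)
  have tinvBC : Tendsto (fun r => 1 / (2 * B r * C r)) (𝓝[>] (0:ℝ))
      (𝓝 (1 / (2 * (-m) * m))) := by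
    have h2 : Tendsto (fun r => 2 * B r * C r) (𝓝[>] (0:ℝ)) (𝓝 (2 * (-m) * m)) :=
      (tendsto_const_nhds.mul tB).mul tC
    have h3 : 2 * (-m) * m ≠ 0 := by nlinarith [hm]
    exact tendsto_const_nhds.div h2 h3
  have d2A0 : deriv (deriv A) 0 = 0 := by
    have hrhs : Tendsto (fun r => ((A r - B r - C r) / r) * ((A r + B r + C r) * (1 / (2 * B r * C r))))
        (𝓝[>] (0:ℝ)) (𝓝 (1 * ((0 + -m + m) * (1 / (2 * (-m) * m))))) :=
      sAmBC.mul (((tA.add tB).add tC).mul tinvBC)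
    have heq : deriv (deriv A) 0 = 1 * ((0 + -m + m) * (1 / (2 * (-m) * m))) := by
      refine tendsto_nhds_unique (sdA.congr' ?_) hrhs
      filter_upwards [self_mem_nhdsWithin] with r (hr : 0 < r)
      have hBne := (hBneg r hr).ne
      have hCne := (hCpos r hr).ne'
      rw [hdA r hr]
      field_simp
      ring
    rw [heq]; ring
  -- Step 4 : second-order remainders
  set ea : ℝ → ℝ := fun r => (A r - 2 * r) / r ^ 2 with hea_def
  set pb : ℝ → ℝ := fun r => (B r + m - r / 2) / r ^ 2 with hpb_def
  set pc : ℝ → ℝ := fun r => (C r - m - r / 2) / r ^ 2 with hpc_def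
  have hAr : ∀ r > (0:ℝ), A r = 2 * r + r ^ 2 * ea r := by
    intro r hr
    rw [hea_def]
    field_simp
    ring
  have hBr : ∀ r > (0:ℝ), B r = -m + r / 2 + r ^ 2 * pb r := by
    intro r hr
    rw [hpb_def]
    field_simp
    ring
  have hCr : ∀ r > (0:ℝ), C r = m + r / 2 + r ^ 2 * pc r := by
    intro r hr
    rw [hpc_def]
    field_simp
    ring
  have tea : Tendsto ea (𝓝[>] (0:ℝ)) (𝓝 0) := by
    have t := taylor2 hA'
    rw [hA0, dA0, d2A0] at t
    refine t.congr fun r => ?_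
    rw [hea_def]
    ring
  have tpb : Tendsto pb (𝓝[>] (0:ℝ)) (𝓝 (deriv (deriv B) 0 / 2)) := by
    have t := taylor2 hB'
    rw [hB0, dB0] at t
    have t2 := t.add (tendsto_const_nhds (x := deriv (deriv B) 0 / 2))
    rw [zero_add] at t2
    refine t2.congr' ?_
    filter_upwards [self_mem_nhdsWithin] with r (hr : 0 < r)
    rw [hpb_def]
    field_simp
    ring
  have tpc : Tendsto pc (𝓝[>] (0:ℝ)) (𝓝 (deriv (deriv C) 0 / 2)) := by
    have t := taylor2 hC'
    rw [hC0, dC0] at t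
    have t2 := t.add (tendsto_const_nhds (x := deriv (deriv C) 0 / 2))
    rw [zero_add] at t2
    refine t2.congr' ?_
    filter_upwards [self_mem_nhdsWithin] with r (hr : 0 < r)
    rw [hpc_def]
    field_simp
    ring
  -- Step 5 : second derivatives of B and C at 0
  set β := deriv (deriv B) 0 with hβ_def
  set γ := deriv (deriv C) 0 with hγ_def
  have tQb : Tendsto (fun r => Qbf m r (ea r) (pb r) (pc r)) (𝓝[>] (0:ℝ))
      (𝓝 (Qbf m 0 0 (β / 2) (γ / 2))) := by
    have hcont : Continuous fun p : ℝ × ℝ × ℝ × ℝ => Qbf m p.1 p.2.1 p.2.2.1 p.2.2.2 := by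
      unfold Qbf; fun_prop
    exact tendsto_comp4 (f := Qbf m) hcont
      (tendsto_id.mono_left nhdsWithin_le_nhds) tea tpb tpc
  have tQc : Tendsto (fun r => Qcf m r (ea r) (pb r) (pc r)) (𝓝[>] (0:ℝ))
      (𝓝 (Qcf m 0 0 (β / 2) (γ / 2))) := by
    have hcont : Continuous fun p : ℝ × ℝ × ℝ × ℝ => Qcf m p.1 p.2.1 p.2.2.1 p.2.2.2 := by
      unfold Qcf; fun_prop
    exact tendsto_comp4 (f := Qcf m) hcont
      (tendsto_id.mono_left nhdsWithin_le_nhds) tea tpb tpc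
  have sdB : Tendsto (fun r => (deriv B r - 1 / 2) / r) (𝓝[>] (0:ℝ)) (𝓝 β) := by
    refine slope_right ?_ (by rw [dB0]; ring)
    rw [hβ_def]
    exact (dB' 0).hasDerivAt.sub_const (1/2)
  have sdC : Tendsto (fun r => (deriv C r - 1 / 2) / r) (𝓝[>] (0:ℝ)) (𝓝 γ) := by
    refine slope_right ?_ (by rw [dC0]; ring)
    rw [hγ_def]
    exact (dC' 0).hasDerivAt.sub_const (1/2)
  have hβeq : β = Qbf m 0 0 (β / 2) (γ / 2) * (1 / (2 * m * 2)) := by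
    refine tendsto_nhds_unique (sdB.congr' ?_) (tQb.mul trCA)
    filter_upwards [self_mem_nhdsWithin] with r (hr : 0 < r)
    have hAne := (hApos r hr).ne'
    have hCne := (hCpos r hr).ne'
    have hr0 := hr.ne'
    rw [hdB r hr]
    have hkey : B r ^ 2 - (C r - A r) ^ 2 - C r * A r
        = r ^ 2 * Qbf m r (ea r) (pb r) (pc r) := by
      rw [hAr r hr, hBr r hr, hCr r hr]
      simp only [Qbf]
      ring
    calc ((B r ^ 2 - (C r - A r) ^ 2) / (2 * C r * A r) - 1 / 2) / r
        = (B r ^ 2 - (C r - A r) ^ 2 - C r * A r) / (2 * C r * A r * r) := by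
          field_simp
      _ = (r ^ 2 * Qbf m r (ea r) (pb r) (pc r)) / (2 * C r * A r * r) := by rw [hkey]
      _ = Qbf m r (ea r) (pb r) (pc r) * (r / (2 * C r * A r)) := by
          field_simp
  have hγeq : γ = Qcf m 0 0 (β / 2) (γ / 2) * (1 / (2 * 2 * (-m))) := by
    refine tendsto_nhds_unique (sdC.congr' ?_) (tQc.mul trAB)
    filter_upwards [self_mem_nhdsWithin] with r (hr : 0 < r)
    have hAne := (hApos r hr).ne'
    have hBne := (hBneg r hr).ne
    have hr0 := hr.ne'
    rw [hdC r hr]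
    have hkey : C r ^ 2 - (A r - B r) ^ 2 - A r * B r
        = r ^ 2 * Qcf m r (ea r) (pb r) (pc r) := by
      rw [hAr r hr, hBr r hr, hCr r hr]
      simp only [Qcf]
      ring
    calc ((C r ^ 2 - (A r - B r) ^ 2) / (2 * A r * B r) - 1 / 2) / r
        = (C r ^ 2 - (A r - B r) ^ 2 - A r * B r) / (2 * A r * B r * r) := by
          field_simp
      _ = (r ^ 2 * Qcf m r (ea r) (pb r) (pc r)) / (2 * A r * B r * r) := by rw [hkey]
      _ = Qcf m r (ea r) (pb r) (pc r) * (r / (2 * A r * B r)) := by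
          field_simp
  have hval1 : Qbf m 0 0 (β / 2) (γ / 2) = -3 - γ * m - β * m := by
    simp only [Qbf]; ring
  have hval2 : Qcf m 0 0 (β / 2) (γ / 2) = -3 + γ * m + β * m := by
    simp only [Qcf]; ring
  rw [hval1] at hβeq
  rw [hval2] at hγeq
  have eb1 : 4 * m * β = -3 - γ * m - β * m := by
    nth_rewrite 1 [hβeq]; field_simp; ring
  have ec1 : 4 * m * γ = 3 - γ * m - β * m := by
    nth_rewrite 1 [hγeq]; field_simp; ring
  have hsum : β + γ = 0 := by
    have h6 : m * (6 * (β + γ)) = 0 := by nlinarith [eb1, ec1]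
    rcases mul_eq_zero.mp h6 with h | h
    · exact absurd h hm'
    · linarith
  have hβval : β = -3 / (4 * m) := by
    have h4 : 4 * m * β = -3 := by nlinarith [eb1, hsum]
    field_simp
    linarith
  have hγval : γ = 3 / (4 * m) := by
    have hng : γ = -β := by linarith
    rw [hng, hβval]; ring
  have tpb2 : Tendsto pb (𝓝[>] (0:ℝ)) (𝓝 (-3 / (8 * m))) := by
    have := tpb
    rw [hβval] at this
    convert this using 2
    field_simp
    ring
  have tpc2 : Tendsto pc (𝓝[>] (0:ℝ)) (𝓝 (3 / (8 * m))) := by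
    have := tpc
    rw [hγval] at this
    convert this using 2
    field_simp
    ring
  -- Step 6 : the three limits
  have tden : Tendsto (fun r => 2 * (B r * C r * (A r / r)) ^ 2) (𝓝[>] (0:ℝ))
      (𝓝 (2 * ((-m) * m * 2) ^ 2)) :=
    tendsto_const_nhds.mul ((((tB.mul tC).mul sA)).pow 2)
  have hden_ne : 2 * ((-m) * m * 2) ^ 2 ≠ 0 := by
    have h0 : (-m) * m * 2 ≠ 0 :=
      mul_ne_zero (mul_ne_zero (neg_ne_zero.mpr hm') hm') two_ne_zero
    exact mul_ne_zero two_ne_zero (pow_ne_zero 2 h0)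
  have hevp : ∀ᶠ r in 𝓝[>] (0:ℝ), (0:ℝ) < r := self_mem_nhdsWithin
  refine ⟨?_, ?_, ?_⟩
  · -- κ(a,b,c) → -3/(2m²)
    have hcont : Continuous fun p : ℝ × ℝ × ℝ × ℝ => Q1f m p.1 p.2.1 p.2.2.1 p.2.2.2 := by
      unfold Q1f; fun_prop
    have tQ : Tendsto (fun r => Q1f m r (ea r) (pb r) (pc r)) (𝓝[>] (0:ℝ))
        (𝓝 (Q1f m 0 0 (-3 / (8 * m)) (3 / (8 * m)))) :=
      tendsto_comp4 (f := Q1f m) hcont (tendsto_id.mono_left nhdsWithin_le_nhds) tea tpb2 tpc2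
    have T := tQ.div tden hden_ne
    have hvv : Q1f m 0 0 (-3 / (8 * m)) (3 / (8 * m)) / (2 * ((-m) * m * 2) ^ 2)
        = -3 / (2 * m ^ 2) := by
      simp only [Q1f]
      field_simp
      ring
    rw [hvv] at T
    refine T.congr' ?_
    filter_upwards [hevp] with r hr
    have hAne := (hApos r hr).ne'
    have hBne := (hBneg r hr).ne
    have hCne := (hCpos r hr).ne'
    have hr0 := hr.ne'
    rw [show kappa (a r) (b r) (c r) = kappa (A r) (B r) (C r) by
      rw [haA r hr.le, hbB r hr.le, hcC r hr.le]]
    unfold kappa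
    have hkey : 2 * A r ^ 4 - A r ^ 2 * (B r - C r) ^ 2 - A r ^ 3 * (B r + C r)
        + A r * (B r - C r) ^ 2 * (B r + C r) - (B r + C r) ^ 2 * (B r - C r) ^ 2
        = r ^ 2 * Q1f m r (ea r) (pb r) (pc r) := by
      rw [hAr r hr, hBr r hr, hCr r hr]
      simp only [Q1f]
      ring
    rw [hkey]
    simp only [Pi.div_apply]
    field_simp
  · -- κ(b,c,a) → 3/(4m²)
    have hcont : Continuous fun p : ℝ × ℝ × ℝ × ℝ => Q2f m p.1 p.2.1 p.2.2.1 p.2.2.2 := by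
      unfold Q2f; fun_prop
    have tQ : Tendsto (fun r => Q2f m r (ea r) (pb r) (pc r)) (𝓝[>] (0:ℝ))
        (𝓝 (Q2f m 0 0 (-3 / (8 * m)) (3 / (8 * m)))) :=
      tendsto_comp4 (f := Q2f m) hcont (tendsto_id.mono_left nhdsWithin_le_nhds) tea tpb2 tpc2
    have T := tQ.div tden hden_ne
    have hvv : Q2f m 0 0 (-3 / (8 * m)) (3 / (8 * m)) / (2 * ((-m) * m * 2) ^ 2)
        = 3 / (4 * m ^ 2) := by
      simp only [Q2f]
      field_simp
      ring
    rw [hvv] at T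
    refine T.congr' ?_
    filter_upwards [hevp] with r hr
    have hAne := (hApos r hr).ne'
    have hBne := (hBneg r hr).ne
    have hCne := (hCpos r hr).ne'
    have hr0 := hr.ne'
    rw [show kappa (b r) (c r) (a r) = kappa (B r) (C r) (A r) by
      rw [haA r hr.le, hbB r hr.le, hcC r hr.le]]
    unfold kappa
    have hkey : 2 * B r ^ 4 - B r ^ 2 * (C r - A r) ^ 2 - B r ^ 3 * (C r + A r)
        + B r * (C r - A r) ^ 2 * (C r + A r) - (C r + A r) ^ 2 * (C r - A r) ^ 2
        = r ^ 2 * Q2f m r (ea r) (pb r) (pc r) := by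
      rw [hAr r hr, hBr r hr, hCr r hr]
      simp only [Q2f]
      ring
    rw [hkey]
    simp only [Pi.div_apply]
    field_simp
  · -- κ(c,a,b) → 3/(4m²)
    have hcont : Continuous fun p : ℝ × ℝ × ℝ × ℝ => Q3f m p.1 p.2.1 p.2.2.1 p.2.2.2 := by
      unfold Q3f; fun_prop
    have tQ : Tendsto (fun r => Q3f m r (ea r) (pb r) (pc r)) (𝓝[>] (0:ℝ))
        (𝓝 (Q3f m 0 0 (-3 / (8 * m)) (3 / (8 * m)))) :=
      tendsto_comp4 (f := Q3f m) hcont (tendsto_id.mono_left nhdsWithin_le_nhds) tea tpb2 tpc2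
    have T := tQ.div tden hden_ne
    have hvv : Q3f m 0 0 (-3 / (8 * m)) (3 / (8 * m)) / (2 * ((-m) * m * 2) ^ 2)
        = 3 / (4 * m ^ 2) := by
      simp only [Q3f]
      field_simp
      ring
    rw [hvv] at T
    refine T.congr' ?_
    filter_upwards [hevp] with r hr
    have hAne := (hApos r hr).ne'
    have hBne := (hBneg r hr).ne
    have hCne := (hCpos r hr).ne'
    have hr0 := hr.ne'
    rw [show kappa (c r) (a r) (b r) = kappa (C r) (A r) (B r) by
      rw [haA r hr.le, hbB r hr.le, hcC r hr.le]]
    unfold kappa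
    have hkey : 2 * C r ^ 4 - C r ^ 2 * (A r - B r) ^ 2 - C r ^ 3 * (A r + B r)
        + C r * (A r - B r) ^ 2 * (A r + B r) - (A r + B r) ^ 2 * (A r - B r) ^ 2
        = r ^ 2 * Q3f m r (ea r) (pb r) (pc r) := by
      rw [hAr r hr, hBr r hr, hCr r hr]
      simp only [Q3f]
      ring
    rw [hkey]
    simp only [Pi.div_apply]
    field_simp
end

section
/- For every r > 0 and every 2-dimensional linear subspace L ⊆ ℝ⁴ with orthonormal basis {u, v}, one has ⟨Q(r)u, u⟩ + ⟨Q(r)v, v⟩ > 0, where Q(r) is the 4×4 diagonal matrix diag(1, r·a'(r)/a(r), r·b'(r)/b(r), r·c'(r)/c(r)). (This expresses the two-convexity of the squared distance function r² to the minimal sphere in the Atiyah–Hitchin manifold.) -/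
/-!
`Q(r)` is diagonal, so for orthonormal `u, v` the quantity `⟨Q u, u⟩ + ⟨Q v, v⟩` is
`∑ dᵢ wᵢ` with weights `wᵢ = uᵢ² + vᵢ² ∈ [0, 1]` summing to `2`. Only `r b'/b` is negative,
so it suffices that it has positive sum with each other entry. The ODE gives
`r a'/a + r b'/b = r (a + b - c)/(a b)` and `r b'/b + r c'/c = r (b + c - a)/(b c)`, both
positive, and concavity of `a` with `a 0 = 0` gives `r a'/a < 1`, hence `1 + r b'/b > 0`.
-/

open Finset Matrix
open scoped RealInnerProductSpace

section Diagonal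

variable {ι : Type*} [Fintype ι] [DecidableEq ι]

lemma inner_toEuclideanLin_diagonal_self (d : ι → ℝ) (x : EuclideanSpace ℝ ι) :
    ⟪toEuclideanLin (diagonal d) x, x⟫ = ∑ i, d i * x i ^ 2 := by
  simp only [PiLp.inner_apply, ofLp_toLpLin, toLin'_apply, mulVec_diagonal, RCLike.inner_apply,
    Real.ringHom_apply]
  exact sum_congr rfl fun i _ => by ring

lemma sq_apply_add_sq_apply_le_one {u v : EuclideanSpace ℝ ι} (hu : ‖u‖ = 1)
    (hv : ‖v‖ = 1) (huv : ⟪u, v⟫ = 0) (i : ι) :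
    u i ^ 2 + v i ^ 2 ≤ 1 := by
  have hon : Orthonormal ℝ ![u, v] := by
    rw [orthonormal_iff_ite]
    intro p q
    fin_cases p <;> fin_cases q <;> simp [hu, hv, huv, real_inner_comm u v]
  simpa [Fin.sum_univ_two, EuclideanSpace.inner_single_right] using
    hon.sum_inner_products_le (EuclideanSpace.single i (1 : ℝ)) (s := univ)

lemma sum_mul_pos_of_add_pos {d w : ι → ℝ} {k : ι} (hdk : d k ≤ 0)
    (hd : ∀ j ≠ k, 0 < d k + d j)
    (hw : ∀ i, 0 ≤ w i) (hwk : w k ≤ 1) (hsum : ∑ i, w i = 2) : 0 < ∑ i, d i * w i := by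
  have hrest : ∑ j ∈ univ.erase k, w j = 2 - w k := by
    rw [← hsum, ← add_sum_erase _ _ (mem_univ k)]; ring
  have hpos : 0 < ∑ j ∈ univ.erase k, (d k + d j) * w j := by
    obtain ⟨j, hj, hwj⟩ : ∃ j ∈ univ.erase k, 0 < w j :=
      (sum_pos_iff_of_nonneg fun j _ => hw j).1 (by linarith)
    exact sum_pos' (fun j hj => mul_nonneg (hd j (ne_of_mem_erase hj)).le (hw j))
      ⟨j, hj, mul_pos (hd j (ne_of_mem_erase hj)) hwj⟩
  have hsplit : ∑ i, d i * w i
      = ∑ j ∈ univ.erase k, (d k + d j) * w j - 2 * d k * (1 - w k) := by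
    simp only [add_mul, sum_add_distrib, ← mul_sum, hrest]
    rw [← add_sum_erase _ _ (mem_univ k)]; ring
  nlinarith

lemma inner_diagonal_add_inner_diagonal_pos {d : ι → ℝ} {k : ι} (hdk : d k ≤ 0)
    (hd : ∀ j ≠ k, 0 < d k + d j)
    {u v : EuclideanSpace ℝ ι} (hu : ‖u‖ = 1) (hv : ‖v‖ = 1) (huv : ⟪u, v⟫ = 0) :
    0 < ⟪toEuclideanLin (diagonal d) u, u⟫ + ⟪toEuclideanLin (diagonal d) v, v⟫ := by
  have hsum : ∑ i, (u i ^ 2 + v i ^ 2) = 2 := by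
    rw [sum_add_distrib, ← EuclideanSpace.real_norm_sq_eq, ← EuclideanSpace.real_norm_sq_eq, hu,
      hv]
    norm_num
  simp only [inner_toEuclideanLin_diagonal_self, ← sum_add_distrib, ← mul_add]
  exact sum_mul_pos_of_add_pos hdk hd (fun i => by positivity)
    (sq_apply_add_sq_apply_le_one hu hv huv k) hsum

end Diagonal

lemma mul_lt_of_strictAntiOn_deriv {f f' : ℝ → ℝ} (hf : ContinuousOn f (Set.Ici 0))
    (hf0 : f 0 = 0)
    (hderiv : ∀ x > 0, HasDerivAt f (f' x) x) (hanti : StrictAntiOn f' (Set.Ioi 0))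
    {r : ℝ} (hr : 0 < r) : r * f' r < f r := by
  obtain ⟨ξ, ⟨hξ0, hξr⟩, hslope⟩ :=
    exists_hasDerivAt_eq_slope f f' hr (hf.mono Set.Icc_subset_Ici_self) fun x hx => hderiv x hx.1
  rw [hf0, sub_zero, sub_zero, eq_div_iff hr.ne'] at hslope
  have := hanti hξ0 (hξ0.trans hξr) hξr
  nlinarith

/-- The Atiyah–Hitchin system reads `a' = F a b c`, `b' = F b c a`, `c' = F c a b`. -/
noncomputable def atiyahHitchinField (x y z : ℝ) : ℝ := (x ^ 2 - (y - z) ^ 2) / (2 * y * z)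

lemma mul_atiyahHitchinField_div_add_pos {r x y z : ℝ} (hr : 0 < r) (hxy : x * y < 0)
    (hz : z ≠ 0) (h : x + y < z) :
    0 < r * atiyahHitchinField x y z / x + r * atiyahHitchinField y z x / y := by
  have hx : x ≠ 0 := by rintro rfl; simp at hxy
  have hy : y ≠ 0 := by rintro rfl; simp at hxy
  have hsum : r * atiyahHitchinField x y z / x + r * atiyahHitchinField y z x / y
      = r * (x + y - z) / (x * y) := by
    unfold atiyahHitchinField; field_simp; ring
  rw [hsum]
  exact div_pos_of_neg_of_neg (mul_neg_of_pos_of_neg hr (by linarith)) hxy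

theorem atiyah_hitchin_two_convexity_general
    (a b c a' b' c' a'' : ℝ → ℝ)
    (hca : ContinuousOn a (Set.Ici 0))
    (hda : ∀ r > (0:ℝ), HasDerivAt a (a' r) r)
    (hdda : ∀ r > (0:ℝ), HasDerivAt a' (a'' r) r)
    (hODEa : ∀ r > (0:ℝ), a' r = (a r ^ 2 - (b r - c r) ^ 2) / (2 * b r * c r))
    (hODEb : ∀ r > (0:ℝ), b' r = (b r ^ 2 - (c r - a r) ^ 2) / (2 * c r * a r))
    (hODEc : ∀ r > (0:ℝ), c' r = (c r ^ 2 - (a r - b r) ^ 2) / (2 * a r * b r))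
    (hia : a 0 = 0)
    (hapos : ∀ r > (0:ℝ), 0 < a r)
    (hcpos : ∀ r > (0:ℝ), 0 < c r)
    (hbneg : ∀ r > (0:ℝ), b r < 0)
    (hb' : ∀ r > (0:ℝ), 0 < b' r)
    (ha'' : ∀ r > (0:ℝ), a'' r < 0)
    (hac : ∀ r > (0:ℝ), a r < c r)
    (habc : ∀ r > (0:ℝ), b r + c r < a r) :
    ∀ r > (0:ℝ), ∀ L : Submodule ℝ (EuclideanSpace ℝ (Fin 4)),
      Module.finrank ℝ L = 2 →
      ∀ u v : EuclideanSpace ℝ (Fin 4), u ∈ L → v ∈ L →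
        ‖u‖ = 1 → ‖v‖ = 1 → inner (𝕜 := ℝ) u v = 0 →
        0 < inner (𝕜 := ℝ)
              (Matrix.toEuclideanLin
                (Matrix.diagonal ![1, r * a' r / a r, r * b' r / b r, r * c' r / c r]) u) u
            + inner (𝕜 := ℝ)
              (Matrix.toEuclideanLin
                (Matrix.diagonal ![1, r * a' r / a r, r * b' r / b r, r * c' r / c r]) v) v := by
  intro r hr L hL u v hu hv hnu hnv huv
  have ha := hapos r hr
  have hb := hbneg r hr
  have hc := hcpos r hr
  have hb_neg : r * b' r / b r < 0 := div_neg_of_pos_of_neg (mul_pos hr (hb' r hr)) hb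
  have hab : 0 < r * a' r / a r + r * b' r / b r := by
    rw [hODEa r hr, hODEb r hr]
    exact mul_atiyahHitchinField_div_add_pos hr (mul_neg_of_pos_of_neg ha hb) hc.ne'
      (by linarith [hac r hr])
  have hbc : 0 < r * b' r / b r + r * c' r / c r := by
    rw [hODEb r hr, hODEc r hr]
    exact mul_atiyahHitchinField_div_add_pos hr (mul_neg_of_neg_of_pos hb hc) ha.ne'
      (by linarith [habc r hr])
  have ha'_anti : StrictAntiOn a' (Set.Ioi 0) :=
    strictAntiOn_of_hasDerivWithinAt_neg (convex_Ioi 0)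
      (fun x hx => (hdda x hx).continuousAt.continuousWithinAt)
      (fun x hx => (hdda x (interior_subset hx)).hasDerivWithinAt)
      (fun x hx => ha'' x (interior_subset hx))
  have ha_lt_one : r * a' r / a r < 1 :=
    (div_lt_one ha).2 (mul_lt_of_strictAntiOn_deriv hca hia hda ha'_anti hr)
  refine inner_diagonal_add_inner_diagonal_pos (k := 2) hb_neg.le ?_ hnu hnv huv
  intro j hj
  fin_cases j <;>
    simp only [Fin.reduceFinMk, Fin.isValue, ne_eq, not_true_eq_false, Matrix.cons_val] at hj ⊢ <;>
    linarith

/-- Two-convexity of the squared distance function to the minimal sphere in the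
Atiyah–Hitchin manifold: for every `r > 0` and every 2-dimensional subspace
`L ⊆ ℝ⁴` with orthonormal basis `{u, v}`, one has `⟨Q(r)u, u⟩ + ⟨Q(r)v, v⟩ > 0`,
where `Q(r) = diag(1, r·a'(r)/a(r), r·b'(r)/b(r), r·c'(r)/c(r))`. -/
theorem atiyah_hitchin_two_convexity
    (m : ℝ) (hm : 0 < m)
    (a b c a' b' c' a'' b'' c'' : ℝ → ℝ)
    (hca : ContinuousOn a (Set.Ici 0))
    (hcb : ContinuousOn b (Set.Ici 0))
    (hcc : ContinuousOn c (Set.Ici 0))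
    (hda : ∀ r > (0:ℝ), HasDerivAt a (a' r) r)
    (hdb : ∀ r > (0:ℝ), HasDerivAt b (b' r) r)
    (hdc : ∀ r > (0:ℝ), HasDerivAt c (c' r) r)
    (hdda : ∀ r > (0:ℝ), HasDerivAt a' (a'' r) r)
    (hddb : ∀ r > (0:ℝ), HasDerivAt b' (b'' r) r)
    (hddc : ∀ r > (0:ℝ), HasDerivAt c' (c'' r) r)
    (hODEa : ∀ r > (0:ℝ), a' r = (a r ^ 2 - (b r - c r) ^ 2) / (2 * b r * c r))
    (hODEb : ∀ r > (0:ℝ), b' r = (b r ^ 2 - (c r - a r) ^ 2) / (2 * c r * a r))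
    (hODEc : ∀ r > (0:ℝ), c' r = (c r ^ 2 - (a r - b r) ^ 2) / (2 * a r * b r))
    (hia : a 0 = 0) (hib : b 0 = -m) (hic : c 0 = m)
    (hapos : ∀ r > (0:ℝ), 0 < a r)
    (hcpos : ∀ r > (0:ℝ), 0 < c r)
    (hbneg : ∀ r > (0:ℝ), b r < 0)
    (ha' : ∀ r > (0:ℝ), 0 < a' r)
    (hb' : ∀ r > (0:ℝ), 0 < b' r)
    (hc' : ∀ r > (0:ℝ), 0 < c' r)
    (ha'' : ∀ r > (0:ℝ), a'' r < 0)
    (hac : ∀ r > (0:ℝ), a r < c r)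
    (habc : ∀ r > (0:ℝ), b r + c r < a r) :
    ∀ r > (0:ℝ), ∀ L : Submodule ℝ (EuclideanSpace ℝ (Fin 4)),
      Module.finrank ℝ L = 2 →
      ∀ u v : EuclideanSpace ℝ (Fin 4), u ∈ L → v ∈ L →
        ‖u‖ = 1 → ‖v‖ = 1 → inner (𝕜 := ℝ) u v = 0 →
        0 < inner (𝕜 := ℝ)
              (Matrix.toEuclideanLin
                (Matrix.diagonal ![1, r * a' r / a r, r * b' r / b r, r * c' r / c r]) u) u
            + inner (𝕜 := ℝ)
              (Matrix.toEuclideanLin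
                (Matrix.diagonal ![1, r * a' r / a r, r * b' r / b r, r * c' r / c r]) v) v :=
  atiyah_hitchin_two_convexity_general a b c a' b' c' a'' hca hda hdda hODEa hODEb hODEc hia hapos
    hcpos hbneg hb' ha'' hac habc
end

section
/- For every z ∈ ℂ and every ψ ∈ ℝ, the 3×3 real matrix S = 1/(1+|z|²) · [[2Re(z), Im(e^{−iψ/2} + e^{iψ/2}z²), Re(e^{−iψ/2} − e^{iψ/2}z²)], [2Im(z), −Re(e^{−iψ/2} + e^{iψ/2}z²), Im(e^{−iψ/2} − e^{iψ/2}z²)], [1−|z|², 2Im(e^{iψ/2}z), −2Re(e^{iψ/2}z)]] is a special orthogonal matrix, i.e. SᵀS = I and det S = 1. -/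
/-!
Writing `e = exp (iψ/2)`, we have `e' = conj e` and `|e| = 1`, so `S = (1 + |z|²)⁻¹ • N` for a
matrix `N` whose entries are polynomials in `Re z, Im z, Re e, Im e`. On the circle `|e| = 1`
the columns of `N` are pairwise orthogonal of length `1 + |z|²` and `det N = (1 + |z|²)³`.
Dividing by `1 + |z|²` gives an orthogonal matrix of determinant one.
-/

open Matrix ComplexConjugate

theorem Matrix.transpose_mul_self_inv_smul_eq_one {n K : Type*} [Fintype n] [DecidableEq n]
    [Field K] {M : Matrix n n K} {r : K} (hr : r ≠ 0) (hM : Mᵀ * M = r ^ 2 • 1) :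
    (r⁻¹ • M)ᵀ * (r⁻¹ • M) = 1 := by
  rw [transpose_smul, Matrix.smul_mul, Matrix.mul_smul, hM, smul_smul, smul_smul, ← sq,
    ← mul_pow, inv_mul_cancel₀ hr, one_pow, one_smul]

theorem Matrix.det_inv_smul_eq_one {n K : Type*} [Fintype n] [DecidableEq n] [Field K]
    {M : Matrix n n K} {r : K} (hr : r ≠ 0) (hM : M.det = r ^ Fintype.card n) :
    (r⁻¹ • M).det = 1 := by
  rw [det_smul, hM, ← mul_pow, inv_mul_cancel₀ hr, one_pow]

/-- `(1 + |z|²) S`, with `e^{iψ/2}` generalised to `w` and `e^{-iψ/2}` written as `conj w`. -/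
noncomputable def so3ParamNumerator (z w : ℂ) : Matrix (Fin 3) (Fin 3) ℝ :=
  !![2 * z.re, (conj w + w * z ^ 2).im, (conj w - w * z ^ 2).re;
     2 * z.im, -(conj w + w * z ^ 2).re, (conj w - w * z ^ 2).im;
     1 - ‖z‖ ^ 2, 2 * (w * z).im, -2 * (w * z).re]

section UnitCircle

variable {w : ℂ} (z : ℂ)

theorem so3ParamNumerator_transpose_mul_self (hw : ‖w‖ = 1) :
    (so3ParamNumerator z w)ᵀ * so3ParamNumerator z w = (1 + ‖z‖ ^ 2) ^ 2 • 1 := by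
  have hw' : w.re * w.re + w.im * w.im = 1 := by
    rw [← Complex.normSq_apply, ← Complex.sq_norm, hw, one_pow]
  rw [so3ParamNumerator, Complex.sq_norm, Complex.normSq_apply]
  ext i j
  fin_cases i <;> fin_cases j <;>
    simp only [transpose_apply, mul_apply, Fin.sum_univ_three, of_apply, cons_val', cons_val_zero,
      cons_val_one, cons_val, cons_val_fin_one, Fin.zero_eta, Fin.mk_one, Fin.reduceFinMk,
      Matrix.smul_apply, one_apply_eq, one_apply_ne, ne_eq, Fin.reduceEq, not_false_eq_true,
      smul_eq_mul, mul_one, mul_zero, sq, Complex.add_re, Complex.add_im, Complex.sub_re,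
      Complex.sub_im, Complex.mul_re, Complex.mul_im, Complex.conj_re, Complex.conj_im,
      Fin.isValue] <;>
    first
    | ring1
    | linear_combination (1 + (z.re * z.re + z.im * z.im)) ^ 2 * hw'

theorem det_so3ParamNumerator (hw : ‖w‖ = 1) :
    (so3ParamNumerator z w).det = (1 + ‖z‖ ^ 2) ^ 3 := by
  have hw' : w.re * w.re + w.im * w.im = 1 := by
    rw [← Complex.normSq_apply, ← Complex.sq_norm, hw, one_pow]
  rw [so3ParamNumerator, Complex.sq_norm, Complex.normSq_apply]
  simp only [det_fin_three, sq, of_apply, cons_val', cons_val_zero, cons_val_one, cons_val,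
    cons_val_fin_one, Complex.add_re, Complex.add_im, Complex.sub_re, Complex.sub_im,
    Complex.mul_re, Complex.mul_im, Complex.conj_re, Complex.conj_im, Fin.isValue]
  linear_combination (1 + (z.re * z.re + z.im * z.im)) ^ 3 * hw'

end UnitCircle

/-- For every `z ∈ ℂ` and `ψ ∈ ℝ`, the matrix
`S = 1/(1+|z|²) · [[2Re z, Im(e^{−iψ/2} + e^{iψ/2}z²), Re(e^{−iψ/2} − e^{iψ/2}z²)],
[2Im z, −Re(e^{−iψ/2} + e^{iψ/2}z²), Im(e^{−iψ/2} − e^{iψ/2}z²)],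
[1−|z|², 2Im(e^{iψ/2}z), −2Re(e^{iψ/2}z)]]`
is special orthogonal: `SᵀS = 1` and `det S = 1`. -/
theorem so3_parametrization (z : ℂ) (ψ : ℝ) :
    let e : ℂ := Complex.exp (Complex.I * (ψ / 2))
    let e' : ℂ := Complex.exp (-(Complex.I * (ψ / 2)))
    let S : Matrix (Fin 3) (Fin 3) ℝ :=
      (1 + ‖z‖ ^ 2)⁻¹ •
        !![2 * z.re, (e' + e * z ^ 2).im, (e' - e * z ^ 2).re;
           2 * z.im, -(e' + e * z ^ 2).re, (e' - e * z ^ 2).im;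
           1 - ‖z‖ ^ 2, 2 * (e * z).im, -2 * (e * z).re]
    Sᵀ * S = 1 ∧ S.det = 1 := by
  intro e e' S
  have he : ‖e‖ = 1 := by
    simpa [e] using Complex.norm_exp_I_mul_ofReal (ψ / 2)
  have he' : e' = conj e := by
    simp [e, e', ← Complex.exp_conj, map_ofNat]
  have hS : S = (1 + ‖z‖ ^ 2)⁻¹ • so3ParamNumerator z e := by
    rw [so3ParamNumerator, ← he']
  have hr : 1 + ‖z‖ ^ 2 ≠ 0 := by positivity
  rw [hS]
  exact ⟨transpose_mul_self_inv_smul_eq_one hr (so3ParamNumerator_transpose_mul_self z he),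
    det_inv_smul_eq_one hr (det_so3ParamNumerator z he)⟩
end

section
/- Setting x = a/c and y = b/c, the functions satisfy x'(r) = (a(r) − c(r))·(a(r) + c(r) − b(r))/(b(r)·c(r)²) and y'(r) = (b(r) − c(r))·(b(r) + c(r) − a(r))/(a(r)·c(r)²) for all r in I; equivalently, x' = −(1/c)·(1−x)(1+x−y)/y and y' = −(1/c)·(1−y)(1+y−x)/x. -/
/-- For solutions `a, b, c` of the Atiyah–Hitchin ODE system on an open interval `I` with
`a·b·c ≠ 0`, the ratios `x = a/c` and `y = b/c` satisfy
`x' = (a − c)(a + c − b)/(b c²)` and `y' = (b − c)(b + c − a)/(a c²)`; equivalently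
`x' = −(1/c)·(1−x)(1+x−y)/y` and `y' = −(1/c)·(1−y)(1+y−x)/x`. -/
theorem atiyah_hitchin_ratio_derivatives
    (I : Set ℝ) (hIopen : IsOpen I) (hIconn : I.OrdConnected)
    (a b c a' b' c' : ℝ → ℝ)
    (hda : ∀ r ∈ I, HasDerivAt a (a' r) r)
    (hdb : ∀ r ∈ I, HasDerivAt b (b' r) r)
    (hdc : ∀ r ∈ I, HasDerivAt c (c' r) r)
    (hne : ∀ r ∈ I, a r * b r * c r ≠ 0)
    (hODEa : ∀ r ∈ I, a' r = (a r ^ 2 - (b r - c r) ^ 2) / (2 * b r * c r))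
    (hODEb : ∀ r ∈ I, b' r = (b r ^ 2 - (c r - a r) ^ 2) / (2 * c r * a r))
    (hODEc : ∀ r ∈ I, c' r = (c r ^ 2 - (a r - b r) ^ 2) / (2 * a r * b r)) :
    ∀ r ∈ I,
      HasDerivAt (fun s => a s / c s)
        ((a r - c r) * (a r + c r - b r) / (b r * c r ^ 2)) r ∧
      HasDerivAt (fun s => b s / c s)
        ((b r - c r) * (b r + c r - a r) / (a r * c r ^ 2)) r ∧
      (a r - c r) * (a r + c r - b r) / (b r * c r ^ 2)
        = -(1 / c r) * ((1 - a r / c r) * (1 + a r / c r - b r / c r) / (b r / c r)) ∧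
      (b r - c r) * (b r + c r - a r) / (a r * c r ^ 2)
        = -(1 / c r) * ((1 - b r / c r) * (1 + b r / c r - a r / c r) / (a r / c r)) := by
  intro r hr
  have hne' := hne r hr
  have ha : a r ≠ 0 := fun h => hne' (by simp [h])
  have hb : b r ≠ 0 := fun h => hne' (by simp [h])
  have hc : c r ≠ 0 := fun h => hne' (by simp [h])
  have hx : HasDerivAt (fun s => a s / c s)
      ((a' r * c r - a r * c' r) / c r ^ 2) r :=
    (hda r hr).div (hdc r hr) hc
  have hy : HasDerivAt (fun s => b s / c s)
      ((b' r * c r - b r * c' r) / c r ^ 2) r :=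
    (hdb r hr).div (hdc r hr) hc
  have ea : (a' r * c r - a r * c' r) / c r ^ 2
      = (a r - c r) * (a r + c r - b r) / (b r * c r ^ 2) := by
    rw [hODEa r hr, hODEc r hr]; field_simp; ring
  have eb : (b' r * c r - b r * c' r) / c r ^ 2
      = (b r - c r) * (b r + c r - a r) / (a r * c r ^ 2) := by
    rw [hODEb r hr, hODEc r hr]; field_simp; ring
  refine ⟨ea ▸ hx, eb ▸ hy, ?_, ?_⟩ <;> (field_simp; ring)
end
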